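/- arXiv:1804.11017 — 11 statements merged into one kernel-verified Lean document; each statement's English description precedes it below -/
import Mathlib

section
/- If A is an NFA with m states and B is an NFA with n states, then the language L(A) ←sdi L(B) is accepted by some NFA with at most 3mn + 2m states. In particular, regular languages are closed under site-directed insertion. -/
/-- Site-directed insertion (SDI) of string `y` into string `x`. -/
def sdiStr {α : Type} (x y : List α) : Set (List α) :=
  { w | ∃ x₁ u z v x₂ : List α,
      x = x₁ ++ u ++ v ++ x₂ ∧ y = u ++ z ++ v ∧ u ≠ [] ∧ v ≠ [] ∧
      w = x₁ ++ u ++ z ++ v ++ x₂ }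

/-- Site-directed insertion extended to languages. -/
def sdiLang {α : Type} (L₁ L₂ : Set (List α)) : Set (List α) :=
  { w | ∃ x ∈ L₁, ∃ y ∈ L₂, w ∈ sdiStr x y }

/-- Alphabetic site-directed insertion of string `y` into string `x`. -/
def asdiStr {α : Type} (x y : List α) : Set (List α) :=
  { w | ∃ (x₁ x₂ z : List α) (a b : α),
      x = x₁ ++ [a] ++ [b] ++ x₂ ∧ y = [a] ++ z ++ [b] ∧
      w = x₁ ++ [a] ++ z ++ [b] ++ x₂ }

/-- Alphabetic site-directed insertion extended to languages. -/
def asdiLang {α : Type} (L₁ L₂ : Set (List α)) : Set (List α) :=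
  { w | ∃ x ∈ L₁, ∃ y ∈ L₂, w ∈ asdiStr x y }

/-- Maximal site-directed insertion of string `y` into string `x`. -/
def maxSdiStr {α : Type} (x y : List α) : Set (List α) :=
  { w | ∃ x₁ u z v x₂ : List α,
      x = x₁ ++ u ++ v ++ x₂ ∧ y = u ++ z ++ v ∧ u ≠ [] ∧ v ≠ [] ∧
      w = x₁ ++ u ++ z ++ v ++ x₂ ∧
      ¬ ∃ x₁' x₂' z' : List α, x₁' <:+ x₁ ∧ x₂' <+: x₂ ∧
          x₁' ++ x₂' ≠ [] ∧ y = x₁' ++ u ++ z' ++ v ++ x₂' }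

/-- Maximal site-directed insertion extended to languages. -/
def maxSdiLang {α : Type} (L₁ L₂ : Set (List α)) : Set (List α) :=
  { w | ∃ x ∈ L₁, ∃ y ∈ L₂, w ∈ maxSdiStr x y }

/-- Minimal site-directed insertion of string `y` into string `x`:
the words `u` and `v` of the matched outfix must be unbordered. -/
def minSdiStr {α : Type} (x y : List α) : Set (List α) :=
  { w | ∃ x₁ u z v x₂ : List α,
      x = x₁ ++ u ++ v ++ x₂ ∧ y = u ++ z ++ v ∧ u ≠ [] ∧ v ≠ [] ∧
      w = x₁ ++ u ++ z ++ v ++ x₂ ∧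
      (∀ s : List α, s <:+ u → s ≠ [] → s ≠ u → ¬ s <+: u) ∧
      (∀ p : List α, p <+: v → p ≠ [] → p ≠ v → ¬ p <:+ v) }

/-- Minimal site-directed insertion extended to languages. -/
def minSdiLang {α : Type} (L₁ L₂ : Set (List α)) : Set (List α) :=
  { w | ∃ x ∈ L₁, ∃ y ∈ L₂, w ∈ minSdiStr x y }

/-!
The automaton guesses the factorisation `w = x₁ u z v x₂` and passes through five phases: on `x₁`
it runs `A` alone; on `u` it runs `A` and `B` (started afresh) in parallel; on `z` it freezes `A`
and runs `B`; on `v` it runs both again; on `x₂` it runs `A` alone. Only the three middle phases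
remember a pair of states, giving `3mn + 2m` states. The phase changes around `u` and `v` are
made while reading a letter of `u` or of `v` respectively, so neither can be empty. Correctness
follows by computing, by induction on the word, the language accepted from each kind of state.
-/

namespace NFA

variable {α σ : Type*} {M : NFA α σ}

theorem mem_acceptsFrom_iff_exists {S : Set σ} {x : List α} :
    x ∈ M.acceptsFrom S ↔ ∃ s ∈ S, x ∈ M.acceptsFrom {s} := by
  simp only [mem_acceptsFrom, mem_evalFrom_iff_exists (S := S)]
  grind

theorem nil_mem_acceptsFrom_singleton {s : σ} : [] ∈ M.acceptsFrom {s} ↔ s ∈ M.accept := by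
  simp

theorem cons_mem_acceptsFrom_singleton {s : σ} {a : α} {x : List α} :
    a :: x ∈ M.acceptsFrom {s} ↔ ∃ t ∈ M.step s a, x ∈ M.acceptsFrom {t} := by
  rw [cons_mem_acceptsFrom, stepSet_singleton, mem_acceptsFrom_iff_exists]

theorem isRegular_accepts {σ : Type} [Finite σ] (M : NFA α σ) : M.accepts.IsRegular :=
  have := Fintype.ofFinite σ
  ⟨Set σ, inferInstance, M.toDFA, M.toDFA_correct⟩

end NFA

/-- States for reading `w = x₁ u z v x₂`, where `p` is a state of `A` and `r` one of `B`.
A state `u p r` is entered on a letter of `u` other than its last, `z p r` on the last letter of `u`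
or on a letter of `z`; likewise `v p r` on a letter of `v` other than its last, and `x₂ p` on the
last letter of `v` or on a letter of `x₂`. -/
inductive SdiState (σA σB : Type*)
  | x₁ (p : σA)
  | u (p : σA) (r : σB)
  | z (p : σA) (r : σB)
  | v (p : σA) (r : σB)
  | x₂ (p : σA)

namespace SdiState

variable {σA σB : Type*}

def equivSum : SdiState σA σB ≃ σA ⊕ (σA × σB) ⊕ (σA × σB) ⊕ (σA × σB) ⊕ σA where
  toFun
    | x₁ p => .inl p
    | u p r => .inr (.inl (p, r))
    | z p r => .inr (.inr (.inl (p, r)))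
    | v p r => .inr (.inr (.inr (.inl (p, r))))
    | x₂ p => .inr (.inr (.inr (.inr p)))
  invFun
    | .inl p => x₁ p
    | .inr (.inl (p, r)) => u p r
    | .inr (.inr (.inl (p, r))) => z p r
    | .inr (.inr (.inr (.inl (p, r)))) => v p r
    | .inr (.inr (.inr (.inr p))) => x₂ p
  left_inv s := by cases s <;> rfl
  right_inv s := by rcases s with p | ⟨p, r⟩ | ⟨p, r⟩ | ⟨p, r⟩ | p <;> rfl

instance [Fintype σA] [Fintype σB] : Fintype (SdiState σA σB) :=
  Fintype.ofEquiv _ equivSum.symm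

end SdiState

theorem card_sdiState {σA σB : Type*} [Fintype σA] [Fintype σB] :
    Fintype.card (SdiState σA σB) =
      3 * Fintype.card σA * Fintype.card σB + 2 * Fintype.card σA := by
  rw [Fintype.card_congr SdiState.equivSum]
  simp only [Fintype.card_sum, Fintype.card_prod]
  ring

section

variable {α σA σB : Type*}

@[simps]
def sdiNFA (A : NFA α σA) (B : NFA α σB) : NFA α (SdiState σA σB) where
  step
    | .x₁ p, a => {t | ∃ p' ∈ A.step p a,
        t = .x₁ p' ∨ ∃ r ∈ B.start, ∃ r' ∈ B.step r a, t = .u p' r' ∨ t = .z p' r'}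
    | .u p r, a => {t | ∃ p' ∈ A.step p a, ∃ r' ∈ B.step r a, t = .u p' r' ∨ t = .z p' r'}
    | .z p r, a => {t | ∃ r' ∈ B.step r a,
        t = .z p r' ∨ ∃ p' ∈ A.step p a, t = .v p' r' ∨ r' ∈ B.accept ∧ t = .x₂ p'}
    | .v p r, a => {t | ∃ p' ∈ A.step p a, ∃ r' ∈ B.step r a,
        t = .v p' r' ∨ r' ∈ B.accept ∧ t = .x₂ p'}
    | .x₂ p, a => {t | ∃ p' ∈ A.step p a, t = .x₂ p'}
  start := {t | ∃ p ∈ A.start, t = .x₁ p}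
  accept := {t | ∃ p ∈ A.accept, t = .x₂ p}

namespace sdiNFA

variable {A : NFA α σA} {B : NFA α σB} {a : α} {w : List α}

open NFA

theorem cons_mem_acceptsFrom_x₁ {p : σA} :
    a :: w ∈ (sdiNFA A B).acceptsFrom {.x₁ p} ↔
      (∃ p' ∈ A.step p a, w ∈ (sdiNFA A B).acceptsFrom {.x₁ p'}) ∨
        ∃ r ∈ B.start, a :: w ∈ (sdiNFA A B).acceptsFrom {.u p r} := by
  simp only [cons_mem_acceptsFrom_singleton, sdiNFA_step, Set.mem_ofPred_eq]
  aesop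

theorem cons_mem_acceptsFrom_u {p : σA} {r : σB} :
    a :: w ∈ (sdiNFA A B).acceptsFrom {.u p r} ↔ ∃ p' ∈ A.step p a, ∃ r' ∈ B.step r a,
      w ∈ (sdiNFA A B).acceptsFrom {.u p' r'} ∨ w ∈ (sdiNFA A B).acceptsFrom {.z p' r'} := by
  simp only [cons_mem_acceptsFrom_singleton, sdiNFA_step, Set.mem_ofPred_eq]
  aesop

theorem cons_mem_acceptsFrom_z {p : σA} {r : σB} :
    a :: w ∈ (sdiNFA A B).acceptsFrom {.z p r} ↔
      (∃ r' ∈ B.step r a, w ∈ (sdiNFA A B).acceptsFrom {.z p r'}) ∨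
        a :: w ∈ (sdiNFA A B).acceptsFrom {.v p r} := by
  simp only [cons_mem_acceptsFrom_singleton, sdiNFA_step, Set.mem_ofPred_eq]
  aesop

theorem cons_mem_acceptsFrom_v {p : σA} {r : σB} :
    a :: w ∈ (sdiNFA A B).acceptsFrom {.v p r} ↔ ∃ p' ∈ A.step p a, ∃ r' ∈ B.step r a,
      w ∈ (sdiNFA A B).acceptsFrom {.v p' r'} ∨
        r' ∈ B.accept ∧ w ∈ (sdiNFA A B).acceptsFrom {.x₂ p'} := by
  simp only [cons_mem_acceptsFrom_singleton, sdiNFA_step, Set.mem_ofPred_eq]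
  aesop

theorem cons_mem_acceptsFrom_x₂ {p : σA} :
    a :: w ∈ (sdiNFA A B).acceptsFrom {.x₂ p} ↔ ∃ p' ∈ A.step p a,
      w ∈ (sdiNFA A B).acceptsFrom {.x₂ p'} := by
  simp only [cons_mem_acceptsFrom_singleton, sdiNFA_step, Set.mem_ofPred_eq]
  aesop

theorem mem_acceptsFrom_x₂ {p : σA} :
    w ∈ (sdiNFA A B).acceptsFrom {.x₂ p} ↔ w ∈ A.acceptsFrom {p} := by
  induction w generalizing p with
  | nil => simp
  | cons a w ih =>
    simp only [cons_mem_acceptsFrom_x₂, ih, cons_mem_acceptsFrom_singleton (M := A)]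

theorem mem_acceptsFrom_v {p : σA} {r : σB} :
    w ∈ (sdiNFA A B).acceptsFrom {.v p r} ↔
      w ∈ A.acceptsFrom {p} ∧ ∃ v x₂, w = v ++ x₂ ∧ v ≠ [] ∧ v ∈ B.acceptsFrom {r} := by
  induction w generalizing p r with
  | nil => simp
  | cons a w ih =>
    simp only [cons_mem_acceptsFrom_v, ih, mem_acceptsFrom_x₂,
      cons_mem_acceptsFrom_singleton (M := A)]
    constructor
    · rintro ⟨p', hp', r', hr', ⟨hA, v, x₂, rfl, -, hB⟩ | ⟨hacc, hA⟩⟩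
      · exact ⟨⟨p', hp', hA⟩, a :: v, x₂, rfl, List.cons_ne_nil _ _,
          cons_mem_acceptsFrom_singleton.mpr ⟨r', hr', hB⟩⟩
      · exact ⟨⟨p', hp', hA⟩, [a], w, rfl, List.cons_ne_nil _ _,
          cons_mem_acceptsFrom_singleton.mpr ⟨r', hr', nil_mem_acceptsFrom_singleton.mpr hacc⟩⟩
    · rintro ⟨⟨p', hp', hA⟩, _ | ⟨b, v⟩, x₂, hw, hv, hB⟩
      · exact absurd rfl hv
      · obtain ⟨rfl, rfl⟩ := List.cons_eq_cons.mp hw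
        obtain ⟨r', hr', hB⟩ := cons_mem_acceptsFrom_singleton.mp hB
        refine ⟨p', hp', r', hr', ?_⟩
        rcases eq_or_ne v [] with rfl | hv
        · exact Or.inr ⟨nil_mem_acceptsFrom_singleton.mp hB, hA⟩
        · exact Or.inl ⟨hA, v, x₂, rfl, hv, hB⟩

theorem mem_acceptsFrom_z {p : σA} {r : σB} :
    w ∈ (sdiNFA A B).acceptsFrom {.z p r} ↔ ∃ z v x₂, w = z ++ v ++ x₂ ∧ v ≠ [] ∧
      v ++ x₂ ∈ A.acceptsFrom {p} ∧ z ++ v ∈ B.acceptsFrom {r} := by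
  induction w generalizing r with
  | nil => simp
  | cons a w ih =>
    simp only [cons_mem_acceptsFrom_z, ih, mem_acceptsFrom_v]
    constructor
    · rintro (⟨r', hr', z, v, x₂, rfl, hv, hA, hB⟩ | ⟨hA, v, x₂, hw, hv, hB⟩)
      · exact ⟨a :: z, v, x₂, rfl, hv, hA, cons_mem_acceptsFrom_singleton.mpr ⟨r', hr', hB⟩⟩
      · exact ⟨[], v, x₂, hw, hv, hw ▸ hA, hB⟩
    · rintro ⟨_ | ⟨b, z⟩, v, x₂, hw, hv, hA, hB⟩
      · rw [List.nil_append] at hw hB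
        exact Or.inr ⟨hw ▸ hA, v, x₂, hw, hv, hB⟩
      · obtain ⟨rfl, rfl⟩ := List.cons_eq_cons.mp hw
        obtain ⟨r', hr', hB⟩ := cons_mem_acceptsFrom_singleton.mp hB
        exact Or.inl ⟨r', hr', z, v, x₂, rfl, hv, hA, hB⟩

theorem mem_acceptsFrom_u {p : σA} {r : σB} :
    w ∈ (sdiNFA A B).acceptsFrom {.u p r} ↔ ∃ u z v x₂, w = u ++ z ++ v ++ x₂ ∧ u ≠ [] ∧
      v ≠ [] ∧ u ++ v ++ x₂ ∈ A.acceptsFrom {p} ∧ u ++ z ++ v ∈ B.acceptsFrom {r} := by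
  induction w generalizing p r with
  | nil => simp
  | cons a w ih =>
    simp only [cons_mem_acceptsFrom_u, ih, mem_acceptsFrom_z]
    constructor
    · rintro ⟨p', hp', r', hr', ⟨u, z, v, x₂, rfl, -, hv, hA, hB⟩ | ⟨z, v, x₂, rfl, hv, hA, hB⟩⟩
      · exact ⟨a :: u, z, v, x₂, rfl, List.cons_ne_nil _ _, hv,
          cons_mem_acceptsFrom_singleton.mpr ⟨p', hp', hA⟩,
          cons_mem_acceptsFrom_singleton.mpr ⟨r', hr', hB⟩⟩
      · exact ⟨[a], z, v, x₂, rfl, List.cons_ne_nil _ _, hv,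
          cons_mem_acceptsFrom_singleton.mpr ⟨p', hp', hA⟩,
          cons_mem_acceptsFrom_singleton.mpr ⟨r', hr', hB⟩⟩
    · rintro ⟨_ | ⟨b, u⟩, z, v, x₂, hw, hu, hv, hA, hB⟩
      · exact absurd rfl hu
      · obtain ⟨rfl, rfl⟩ := List.cons_eq_cons.mp hw
        obtain ⟨p', hp', hA⟩ := cons_mem_acceptsFrom_singleton.mp hA
        obtain ⟨r', hr', hB⟩ := cons_mem_acceptsFrom_singleton.mp hB
        refine ⟨p', hp', r', hr', ?_⟩
        rcases eq_or_ne u [] with rfl | hu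
        · exact Or.inr ⟨z, v, x₂, rfl, hv, hA, hB⟩
        · exact Or.inl ⟨u, z, v, x₂, rfl, hu, hv, hA, hB⟩

theorem mem_acceptsFrom_x₁ {p : σA} :
    w ∈ (sdiNFA A B).acceptsFrom {.x₁ p} ↔ ∃ x₁ u z v x₂, w = x₁ ++ u ++ z ++ v ++ x₂ ∧
      u ≠ [] ∧ v ≠ [] ∧ x₁ ++ u ++ v ++ x₂ ∈ A.acceptsFrom {p} ∧ u ++ z ++ v ∈ B.accepts := by
  induction w generalizing p with
  | nil => simp
  | cons a w ih =>
    simp only [cons_mem_acceptsFrom_x₁, ih, mem_acceptsFrom_u, accepts_eq_acceptsFrom_start,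
      mem_acceptsFrom_iff_exists (S := B.start)]
    constructor
    · rintro (⟨p', hp', x₁, u, z, v, x₂, rfl, hu, hv, hA, hB⟩ |
        ⟨r, hr, u, z, v, x₂, hw, hu, hv, hA, hB⟩)
      · exact ⟨a :: x₁, u, z, v, x₂, rfl, hu, hv,
          cons_mem_acceptsFrom_singleton.mpr ⟨p', hp', hA⟩, hB⟩
      · exact ⟨[], u, z, v, x₂, hw, hu, hv, hA, r, hr, hB⟩
    · rintro ⟨_ | ⟨b, x₁⟩, u, z, v, x₂, hw, hu, hv, hA, r, hr, hB⟩
      · exact Or.inr ⟨r, hr, u, z, v, x₂, hw, hu, hv, hA, hB⟩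
      · obtain ⟨rfl, rfl⟩ := List.cons_eq_cons.mp hw
        obtain ⟨p', hp', hA⟩ := cons_mem_acceptsFrom_singleton.mp hA
        exact Or.inl ⟨p', hp', x₁, u, z, v, x₂, rfl, hu, hv, hA, r, hr, hB⟩

theorem accepts_eq {α : Type} (A : NFA α σA) (B : NFA α σB) :
    (sdiNFA A B).accepts = sdiLang A.accepts B.accepts := by
  ext w
  rw [accepts_eq_acceptsFrom_start, mem_acceptsFrom_iff_exists]
  simp only [sdiNFA_start, Set.mem_ofPred_eq]
  constructor
  · rintro ⟨_, ⟨p, hp, rfl⟩, hw⟩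
    obtain ⟨x₁, u, z, v, x₂, rfl, hu, hv, hA, hB⟩ := mem_acceptsFrom_x₁.mp hw
    exact ⟨_, mem_acceptsFrom_iff_exists.mpr ⟨p, hp, hA⟩, _, hB,
      x₁, u, z, v, x₂, rfl, rfl, hu, hv, rfl⟩
  · rintro ⟨x, hx, y, hy, x₁, u, z, v, x₂, rfl, rfl, hu, hv, rfl⟩
    obtain ⟨p, hp, hA⟩ := mem_acceptsFrom_iff_exists.mp hx
    exact ⟨_, ⟨p, hp, rfl⟩, mem_acceptsFrom_x₁.mpr ⟨x₁, u, z, v, x₂, rfl, hu, hv, hA, hy⟩⟩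

end sdiNFA

end

theorem Language.IsRegular.sdiLang {α : Type} {L₁ L₂ : Language α} (h₁ : L₁.IsRegular)
    (h₂ : L₂.IsRegular) : Language.IsRegular (sdiLang L₁ L₂) := by
  obtain ⟨σ₁, _, M₁, rfl⟩ := h₁
  obtain ⟨σ₂, _, M₂, rfl⟩ := h₂
  rw [← M₁.toNFA_correct, ← M₂.toNFA_correct, ← sdiNFA.accepts_eq]
  exact (sdiNFA M₁.toNFA M₂.toNFA).isRegular_accepts

/-- If `A` is an NFA with `m` states and `B` an NFA with `n` states, then
`L(A) ←sdi L(B)` is accepted by an NFA with at most `3mn + 2m` states.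
In particular, regular languages are closed under site-directed insertion. -/
theorem sdi_nfa_upper_bound {α : Type} {σA σB : Type} [Fintype σA] [Fintype σB]
    {m n : ℕ} (A : NFA α σA) (B : NFA α σB)
    (hm : Fintype.card σA = m) (hn : Fintype.card σB = n) :
    (∃ (σ : Type) (inst : Fintype σ) (C : NFA α σ),
        @Fintype.card σ inst ≤ 3 * m * n + 2 * m ∧
        C.accepts = sdiLang A.accepts B.accepts) ∧
    (∀ L₁ L₂ : Language α, L₁.IsRegular → L₂.IsRegular →
        Language.IsRegular (sdiLang L₁ L₂)) := by
  refine ⟨⟨SdiState σA σB, inferInstance, sdiNFA A B, ?_, sdiNFA.accepts_eq A B⟩,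
    fun L₁ L₂ h₁ h₂ => h₁.sdiLang h₂⟩
  rw [card_sdiState, hm, hn]
end

section
/- Let T_sdi = 0*σ⁺1*σ⁺0* and T_a-sdi = 0*σ1*σ0* be sets of trajectories over Γ = {0, 1, σ}. Then for all languages L₁, L₂ ⊆ Σ*: L₁ ←sdi L₂ = L₁ ⋔_{T_sdi} L₂ and L₁ ←a-sdi L₂ = L₁ ⋔_{T_a-sdi} L₂. -/
/-- The trajectory alphabet Γ = {0, 1, σ}. -/
inductive Traj : Type
  | zero : Traj
  | one : Traj
  | sigma : Traj
  deriving DecidableEq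

/-- Semantic shuffle of two strings along a single trajectory:
`0` selects the next symbol of the first string, `1` the next symbol of the
second and `σ` demands that the next symbols of both strings coincide. -/
def semShuffle {α : Type} : List Traj → List α → List α → Set (List α)
  | [], [], [] => {[]}
  | [], _, _ => ∅
  | Traj.zero :: t', a :: x', y => (fun u => a :: u) '' semShuffle t' x' y
  | Traj.one :: t', x, b :: y' => (fun u => b :: u) '' semShuffle t' x y'
  | Traj.sigma :: t', a :: x', b :: y' =>
      { w | a = b ∧ ∃ u ∈ semShuffle t' x' y', w = a :: u }
  | _ :: _, _, _ => ∅

/-- Semantic shuffle of two languages on a set of trajectories. -/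
def semShuffleT {α : Type} (T : Set (List Traj)) (L₁ L₂ : Set (List α)) :
    Set (List α) :=
  { w | ∃ t ∈ T, ∃ x ∈ L₁, ∃ y ∈ L₂, w ∈ semShuffle t x y }

/-- The trajectory set `0* σ⁺ 1* σ⁺ 0*`. -/
def Tsdi : Set (List Traj) :=
  { t | ∃ p q r s u : ℕ, 1 ≤ q ∧ 1 ≤ s ∧
      t = List.replicate p Traj.zero ++ List.replicate q Traj.sigma ++
          List.replicate r Traj.one ++ List.replicate s Traj.sigma ++
          List.replicate u Traj.zero }

/-- The trajectory set `0* σ 1* σ 0*`. -/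
def Tasdi : Set (List Traj) :=
  { t | ∃ p r u : ℕ,
      t = List.replicate p Traj.zero ++ [Traj.sigma] ++
          List.replicate r Traj.one ++ [Traj.sigma] ++
          List.replicate u Traj.zero }

section Aux
variable {α : Type}

lemma mem_shuffle_nil (x y w : List α) :
    w ∈ semShuffle [] x y ↔ x = [] ∧ y = [] ∧ w = [] := by
  cases x <;> cases y <;> simp [semShuffle]

lemma mem_shuffle_zero_cons (t : List Traj) (x y w : List α) :
    w ∈ semShuffle (Traj.zero :: t) x y ↔
      ∃ a x' w', x = a :: x' ∧ w' ∈ semShuffle t x' y ∧ w = a :: w' := by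
  cases x with
  | nil => simp [semShuffle]
  | cons a x' =>
      simp only [semShuffle, Set.mem_image]
      constructor
      · rintro ⟨w', hw', rfl⟩; exact ⟨a, x', w', rfl, hw', rfl⟩
      · rintro ⟨a', x'', w', h, hw', rfl⟩
        cases h; exact ⟨w', hw', rfl⟩

lemma mem_shuffle_one_cons (t : List Traj) (x y w : List α) :
    w ∈ semShuffle (Traj.one :: t) x y ↔
      ∃ b y' w', y = b :: y' ∧ w' ∈ semShuffle t x y' ∧ w = b :: w' := by
  cases y with
  | nil => cases x <;> simp [semShuffle]
  | cons b y' =>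
      have : semShuffle (Traj.one :: t) x (b :: y') =
          (fun u => b :: u) '' semShuffle t x y' := by
        cases x <;> rfl
      rw [this]
      simp only [Set.mem_image]
      constructor
      · rintro ⟨w', hw', rfl⟩; exact ⟨b, y', w', rfl, hw', rfl⟩
      · rintro ⟨b', y'', w', h, hw', rfl⟩
        cases h; exact ⟨w', hw', rfl⟩

lemma mem_shuffle_sigma_cons (t : List Traj) (x y w : List α) :
    w ∈ semShuffle (Traj.sigma :: t) x y ↔
      ∃ a x' y' w', x = a :: x' ∧ y = a :: y' ∧
        w' ∈ semShuffle t x' y' ∧ w = a :: w' := by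
  cases x with
  | nil => simp [semShuffle]
  | cons a x' =>
    cases y with
    | nil => simp [semShuffle]
    | cons b y' =>
        show a = b ∧ (∃ u ∈ semShuffle t x' y', w = a :: u) ↔ _
        constructor
        · rintro ⟨rfl, u, hu, rfl⟩; exact ⟨a, x', y', u, rfl, rfl, hu, rfl⟩
        · rintro ⟨a', x'', y'', u, h1, h2, hu, rfl⟩
          cases h1; cases h2; exact ⟨rfl, u, hu, rfl⟩

end Aux
section Blocks
variable {α : Type}

lemma mem_shuffle_zeros (p : ℕ) (t : List Traj) (x y w : List α) :
    w ∈ semShuffle (List.replicate p Traj.zero ++ t) x y ↔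
      ∃ x₁ x', x = x₁ ++ x' ∧ x₁.length = p ∧
        ∃ w', w' ∈ semShuffle t x' y ∧ w = x₁ ++ w' := by
  induction p generalizing x w with
  | zero =>
      constructor
      · intro h; exact ⟨[], x, rfl, rfl, w, h, rfl⟩
      · rintro ⟨x₁, x', rfl, hl, w', hw', rfl⟩
        rw [List.length_eq_zero_iff] at hl; subst hl; simpa using hw'
  | succ p ih =>
      rw [List.replicate_succ, List.cons_append, mem_shuffle_zero_cons]
      constructor
      · rintro ⟨a, x', w', rfl, hw', rfl⟩
        rw [ih] at hw'
        obtain ⟨x₁, x'', rfl, hl, w'', hw'', rfl⟩ := hw'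
        exact ⟨a :: x₁, x'', rfl, by simp [hl], w'', hw'', rfl⟩
      · rintro ⟨x₁, x', rfl, hl, w', hw', rfl⟩
        cases x₁ with
        | nil => simp at hl
        | cons a x₁ =>
            refine ⟨a, x₁ ++ x', x₁ ++ w', rfl, ?_, rfl⟩
            rw [ih]
            exact ⟨x₁, x', rfl, by simpa using hl, w', hw', rfl⟩

lemma mem_shuffle_ones (r : ℕ) (t : List Traj) (x y w : List α) :
    w ∈ semShuffle (List.replicate r Traj.one ++ t) x y ↔
      ∃ y₁ y', y = y₁ ++ y' ∧ y₁.length = r ∧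
        ∃ w', w' ∈ semShuffle t x y' ∧ w = y₁ ++ w' := by
  induction r generalizing y w with
  | zero =>
      constructor
      · intro h; exact ⟨[], y, rfl, rfl, w, h, rfl⟩
      · rintro ⟨y₁, y', rfl, hl, w', hw', rfl⟩
        rw [List.length_eq_zero_iff] at hl; subst hl; simpa using hw'
  | succ r ih =>
      rw [List.replicate_succ, List.cons_append, mem_shuffle_one_cons]
      constructor
      · rintro ⟨b, y', w', rfl, hw', rfl⟩
        rw [ih] at hw'
        obtain ⟨y₁, y'', rfl, hl, w'', hw'', rfl⟩ := hw'
        exact ⟨b :: y₁, y'', rfl, by simp [hl], w'', hw'', rfl⟩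
      · rintro ⟨y₁, y', rfl, hl, w', hw', rfl⟩
        cases y₁ with
        | nil => simp at hl
        | cons b y₁ =>
            refine ⟨b, y₁ ++ y', y₁ ++ w', rfl, ?_, rfl⟩
            rw [ih]
            exact ⟨y₁, y', rfl, by simpa using hl, w', hw', rfl⟩

lemma mem_shuffle_sigmas (q : ℕ) (t : List Traj) (x y w : List α) :
    w ∈ semShuffle (List.replicate q Traj.sigma ++ t) x y ↔
      ∃ s x' y', x = s ++ x' ∧ y = s ++ y' ∧ s.length = q ∧
        ∃ w', w' ∈ semShuffle t x' y' ∧ w = s ++ w' := by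
  induction q generalizing x y w with
  | zero =>
      constructor
      · intro h; exact ⟨[], x, y, rfl, rfl, rfl, w, h, rfl⟩
      · rintro ⟨s, x', y', rfl, rfl, hl, w', hw', rfl⟩
        rw [List.length_eq_zero_iff] at hl; subst hl; simpa using hw'
  | succ q ih =>
      rw [List.replicate_succ, List.cons_append, mem_shuffle_sigma_cons]
      constructor
      · rintro ⟨a, x', y', w', rfl, rfl, hw', rfl⟩
        rw [ih] at hw'
        obtain ⟨s, x'', y'', rfl, rfl, hl, w'', hw'', rfl⟩ := hw'
        exact ⟨a :: s, x'', y'', rfl, rfl, by simp [hl], w'', hw'', rfl⟩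
      · rintro ⟨s, x', y', rfl, rfl, hl, w', hw', rfl⟩
        cases s with
        | nil => simp at hl
        | cons a s =>
            refine ⟨a, s ++ x', s ++ y', s ++ w', rfl, rfl, ?_, rfl⟩
            rw [ih]
            exact ⟨s, x', y', rfl, rfl, by simpa using hl, w', hw', rfl⟩

end Blocks
section Main
variable {α : Type}

lemma mem_shuffle_zeros' (p : ℕ) (x y w : List α) :
    w ∈ semShuffle (List.replicate p Traj.zero) x y ↔
      x.length = p ∧ y = [] ∧ w = x := by
  have h := mem_shuffle_zeros p [] x y w
  rw [List.append_nil] at h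
  rw [h]
  constructor
  · rintro ⟨x₁, x', rfl, hl, w', hw', rfl⟩
    rw [mem_shuffle_nil] at hw'
    obtain ⟨rfl, rfl, rfl⟩ := hw'
    simp [hl]
  · rintro ⟨hl, rfl, rfl⟩
    exact ⟨_, [], by simp, hl, [], by simp [mem_shuffle_nil], by simp⟩

lemma mem_shuffle_traj (p q r s u' : ℕ) (x y w : List α) :
    w ∈ semShuffle (List.replicate p Traj.zero ++ List.replicate q Traj.sigma ++
        List.replicate r Traj.one ++ List.replicate s Traj.sigma ++
        List.replicate u' Traj.zero) x y ↔
      ∃ x₁ u z v x₂ : List α, x₁.length = p ∧ u.length = q ∧ z.length = r ∧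
        v.length = s ∧ x₂.length = u' ∧
        x = x₁ ++ u ++ v ++ x₂ ∧ y = u ++ z ++ v ∧
        w = x₁ ++ u ++ z ++ v ++ x₂ := by
  simp only [List.append_assoc]
  rw [mem_shuffle_zeros]
  constructor
  · rintro ⟨x₁, x', rfl, hp, w1, hw1, rfl⟩
    rw [mem_shuffle_sigmas] at hw1
    obtain ⟨u, x'', y', rfl, rfl, hq, w2, hw2, rfl⟩ := hw1
    rw [mem_shuffle_ones] at hw2
    obtain ⟨z, y'', rfl, hr, w3, hw3, rfl⟩ := hw2
    rw [mem_shuffle_sigmas] at hw3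
    obtain ⟨v, x''', y''', rfl, rfl, hs, w4, hw4, rfl⟩ := hw3
    rw [mem_shuffle_zeros'] at hw4
    obtain ⟨hu, rfl, rfl⟩ := hw4
    exact ⟨x₁, u, z, v, w4, hp, hq, hr, hs, hu,
      by simp [List.append_assoc], by simp [List.append_assoc],
      by simp [List.append_assoc]⟩
  · rintro ⟨x₁, u, z, v, x₂, hp, hq, hr, hs, hu, rfl, rfl, rfl⟩
    refine ⟨x₁, u ++ (v ++ x₂), by simp, hp,
      u ++ (z ++ (v ++ x₂)), ?_, by simp⟩
    rw [mem_shuffle_sigmas]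
    refine ⟨u, v ++ x₂, z ++ v, rfl, by simp, hq, z ++ (v ++ x₂), ?_, rfl⟩
    rw [mem_shuffle_ones]
    refine ⟨z, v, rfl, hr, v ++ x₂, ?_, rfl⟩
    rw [mem_shuffle_sigmas]
    refine ⟨v, x₂, [], rfl, by simp, hs, x₂, ?_, rfl⟩
    rw [mem_shuffle_zeros']
    exact ⟨hu, rfl, rfl⟩

end Main
/-- SDI and alphabetic SDI are semantic shuffles on the regular trajectory
sets `0*σ⁺1*σ⁺0*` and `0*σ1*σ0*`, respectively. -/
theorem sdi_as_semantic_shuffle {α : Type} (L₁ L₂ : Language α) :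
    sdiLang L₁ L₂ = semShuffleT Tsdi L₁ L₂ ∧
    asdiLang L₁ L₂ = semShuffleT Tasdi L₁ L₂ := by
  constructor
  · ext w
    simp only [sdiLang, semShuffleT, Tsdi, sdiStr, Set.mem_setOf_eq]
    constructor
    · rintro ⟨x, hx, y, hy, x₁, u, z, v, x₂, rfl, rfl, hu, hv, rfl⟩
      refine ⟨_, ⟨x₁.length, u.length, z.length, v.length, x₂.length,
        List.length_pos_iff.2 hu, List.length_pos_iff.2 hv, rfl⟩, _, hx, _, hy, ?_⟩
      rw [mem_shuffle_traj]
      exact ⟨x₁, u, z, v, x₂, rfl, rfl, rfl, rfl, rfl, rfl, rfl, rfl⟩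
    · rintro ⟨t, ⟨p, q, r, s, u', hq, hs, rfl⟩, x, hx, y, hy, hw⟩
      rw [mem_shuffle_traj] at hw
      obtain ⟨x₁, u, z, v, x₂, hp, hqq, hr, hss, hu2, rfl, rfl, rfl⟩ := hw
      refine ⟨_, hx, _, hy, x₁, u, z, v, x₂, rfl, rfl, ?_, ?_, rfl⟩
      · exact List.ne_nil_of_length_pos (by omega)
      · exact List.ne_nil_of_length_pos (by omega)
  · ext w
    simp only [asdiLang, semShuffleT, Tasdi, asdiStr, Set.mem_setOf_eq]
    constructor
    · rintro ⟨x, hx, y, hy, x₁, x₂, z, a, b, rfl, rfl, rfl⟩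
      refine ⟨_, ⟨x₁.length, z.length, x₂.length, rfl⟩, _, hx, _, hy, ?_⟩
      rw [show ([Traj.sigma] : List Traj) = List.replicate 1 Traj.sigma from rfl,
        mem_shuffle_traj]
      exact ⟨x₁, [a], z, [b], x₂, rfl, rfl, rfl, rfl, rfl, rfl, rfl, rfl⟩
    · rintro ⟨t, ⟨p, r, u', rfl⟩, x, hx, y, hy, hw⟩
      rw [show ([Traj.sigma] : List Traj) = List.replicate 1 Traj.sigma from rfl,
        mem_shuffle_traj] at hw
      obtain ⟨x₁, u, z, v, x₂, hp, hqq, hr, hss, hu2, rfl, rfl, rfl⟩ := hw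
      obtain ⟨a, rfl⟩ := List.length_eq_one_iff.1 hqq
      obtain ⟨b, rfl⟩ := List.length_eq_one_iff.1 hss
      exact ⟨_, hx, _, hy, x₁, x₂, z, a, b, rfl, rfl, rfl⟩
end

section
/- There exist an alphabet Σ and strings x, y ∈ Σ* such that x ←min-sdi y ≠ ∅ but x ←a-sdi y = ∅. -/
/-- Min-SDI may be possible even when alphabetic SDI is not. -/
theorem minSdi_ne_asdi :
    ∃ (β : Type) (x y : List β), minSdiStr x y ≠ ∅ ∧ asdiStr x y = ∅ := by
  refine ⟨ℕ, [0, 2, 1], [0, 2, 1], ?_, ?_⟩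
  · intro h
    have hmem : ([0, 2, 1] : List ℕ) ∈ minSdiStr [0, 2, 1] [0, 2, 1] := by
      refine ⟨[], [0, 2], [], [1], [], by simp, by simp, by simp, by simp, by simp,
        ?_, ?_⟩
      · intro s hs h1 h2 hp
        rcases hs with ⟨t, ht⟩
        match t with
        | [] => exact h2 ht
        | [a] =>
          obtain ⟨rfl, rfl⟩ : a = 0 ∧ s = [2] := by
            cases s with
            | nil => exact absurd rfl h1
            | cons c cs => simp_all
          rcases hp with ⟨r, hr⟩
          simp at hr
        | a :: b :: ts =>
          have hl := congrArg List.length ht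
          simp at hl
          cases s with
          | nil => exact h1 rfl
          | cons c cs => simp at hl
      · intro p hp h1 h2 hs
        rcases hp with ⟨t, ht⟩
        cases p with
        | nil => exact h1 rfl
        | cons c cs =>
          cases cs with
          | nil =>
            simp at ht
            exact h2 (by simp [ht.1])
          | cons d ds =>
            have hl := congrArg List.length ht
            simp at hl
    rw [h] at hmem
    exact hmem
  · ext w
    simp only [Set.mem_empty_iff_false, iff_false]
    rintro ⟨x₁, x₂, z, a, b, hx, hy, -⟩
    have hz : z = [2] ∧ a = 0 ∧ b = 1 := by
      match z with
      | [] => simp at hy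
      | [c] => simp at hy; exact ⟨by simp [hy.2.1.symm], hy.1.symm, hy.2.2.symm⟩
      | c :: d :: zs =>
        have := congrArg List.length hy
        simp at this
    obtain ⟨rfl, rfl, rfl⟩ := hz
    match x₁ with
    | [] => simp at hx
    | [c] => simp at hx
    | c :: d :: ts =>
      have := congrArg List.length hx
      simp at this
      omega
end

section
/- There exist regular languages L₁ and L₂ (over the alphabet Σ = {a, b, $, %}) such that L₁ ←max-sdi L₂ is not regular. -/
/-- The four-letter alphabet Σ = {a, b, $, %}. -/
inductive Sym4 : Type
  | a : Sym4
  | b : Sym4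
  | dollar : Sym4
  | percent : Sym4
  deriving DecidableEq

instance instFintypeSym4 : Fintype Sym4 :=
  ⟨{Sym4.a, Sym4.b, Sym4.dollar, Sym4.percent}, fun x => by cases x <;> simp⟩

/-!
Take `L₁ = L₂ = a*%a$`. Inserting `y = aⁱ%a$` into `x = aⁿ%a$` at the site `u = a`, `v = $`
gives `aⁿ%aⁱ%a$`, and counting the letters `%` and `$` shows that no other site yields a word
with two `%`. That site is maximal unless the prefix `aⁱ%` of `y` also matches a suffix of `aⁿ%`,
i.e. unless `i ≤ n`. So `aⁿ%aⁱ%a$` is in the insertion iff `n < i`: the left quotients by the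
words `aⁿ%` are pairwise distinct, and Myhill–Nerode rules out regularity.
-/

namespace Language

variable {α : Type*} {L : Language α}

theorem leftQuotient_mem_of_closed {S : Set (Language α)} (hL : L ∈ S)
    (hS : ∀ K ∈ S, ∀ c, K.leftQuotient [c] ∈ S) (x : List α) : L.leftQuotient x ∈ S := by
  induction x generalizing L with
  | nil => simpa
  | cons c x ih => simpa [← leftQuotient_append] using ih (hS L hL c)

theorem isRegular_of_leftQuotient_closed {S : Set (Language α)} (hS_fin : S.Finite) (hL : L ∈ S)
    (hS : ∀ K ∈ S, ∀ c, K.leftQuotient [c] ∈ S) : L.IsRegular :=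
  .of_finite_range_leftQuotient <|
    hS_fin.subset <| Set.range_subset_iff.2 (leftQuotient_mem_of_closed hL hS)

theorem not_isRegular_of_injective_leftQuotient {f : ℕ → List α}
    (hf : Function.Injective (L.leftQuotient ∘ f)) : ¬ L.IsRegular := fun h =>
  Set.infinite_range_of_injective hf <|
    h.finite_range_leftQuotient.subset (Set.range_comp_subset_range _ _)

@[simp]
theorem mem_singleton {v w : List α} : v ∈ ({w} : Language α) ↔ v = w := Iff.rfl

theorem leftQuotient_singleton_cons [DecidableEq α] (c d : α) (w : List α) :
    ({c :: w} : Language α).leftQuotient [d] = if d = c then {w} else 0 := by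
  ext v; split_ifs with h <;> simp [h]

theorem leftQuotient_singleton_nil (c : α) : ({[]} : Language α).leftQuotient [c] = 0 := by
  ext v; simp

@[simp]
theorem zero_leftQuotient (x : List α) : (0 : Language α).leftQuotient x = 0 := rfl

end Language

namespace List

variable {α : Type*}

theorem infix_or_exists_of_append_append_eq_append_cons {l₁ m l₂ r₁ r₂ : List α} {c : α}
    (h : l₁ ++ m ++ l₂ = r₁ ++ c :: r₂) (hc : c ∉ m) :
    m <:+: r₁ ∨ ∃ t, l₁ = r₁ ++ c :: t ∧ r₂ = t ++ m ++ l₂ := by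
  rcases append_eq_append_iff.1 h with ⟨s, rfl, -⟩ | ⟨s, hl, hr⟩
  · exact .inl ⟨l₁, s, by simp⟩
  rcases s with _ | ⟨d, s⟩
  · exact .inl ⟨l₁, [], by simpa using hl⟩
  obtain ⟨rfl, rfl⟩ : c = d ∧ r₂ = s ++ l₂ := by simpa [eq_comm] using hr
  rcases append_eq_append_iff.1 hl with ⟨s', rfl, hm⟩ | ⟨s', rfl, hm⟩
  · exact absurd (by simp [hm]) hc
  rcases s' with _ | ⟨d, s'⟩
  · rw [nil_append] at hm
    exact absurd (by simp [← hm]) hc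
  obtain ⟨rfl, rfl⟩ : c = d ∧ s = s' ++ m := by simpa [eq_comm] using hm
  exact .inr ⟨s', rfl, by simp⟩

theorem append_cons_inj_of_notMem_left {l₁ l₂ r₁ r₂ : List α} {c : α} (h₁ : c ∉ l₁)
    (h₂ : c ∉ l₂) : l₁ ++ c :: r₁ = l₂ ++ c :: r₂ ↔ l₁ = l₂ ∧ r₁ = r₂ := by
  refine ⟨fun h => ?_, fun ⟨h, h'⟩ => h ▸ h' ▸ rfl⟩
  rcases append_eq_append_iff.1 h with ⟨_ | ⟨d, s⟩, rfl, hs⟩ | ⟨_ | ⟨d, s⟩, rfl, hs⟩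
  · simpa using hs
  · obtain ⟨rfl, -⟩ := cons_eq_cons.1 hs
    simp at h₂
  · simpa [eq_comm] using hs
  · obtain ⟨rfl, -⟩ := cons_eq_cons.1 hs
    simp at h₁

end List

namespace MaxSdiNotRegular

open List Sym4

def stem (k : ℕ) : List Sym4 := replicate k a ++ [percent, a, dollar]

def stemLang : Language Sym4 := Set.range stem

def word (n i : ℕ) : List Sym4 := replicate n a ++ percent :: stem i

theorem replicate_append_percent_inj {k N : ℕ} {r R : List Sym4} :
    replicate k a ++ percent :: r = replicate N a ++ percent :: R ↔ k = N ∧ r = R := by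
  rw [append_cons_inj_of_notMem_left (by simp) (by simp)]
  simp

theorem stem_injective : Function.Injective stem := fun _ _ h =>
  (replicate_append_percent_inj.1 h).1

theorem word_inj {n i N I : ℕ} : word n i = word N I ↔ n = N ∧ i = I := by
  rw [word, word, replicate_append_percent_inj, stem_injective.eq_iff]

theorem count_percent_stem (k : ℕ) : count percent (stem k) = 1 := by
  simp [stem, count_replicate]

theorem count_dollar_stem (k : ℕ) : count dollar (stem k) = 1 := by
  simp [stem, count_replicate]

theorem count_percent_word (n i : ℕ) : count percent (word n i) = 2 := by
  simp [word, count_replicate, count_percent_stem]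

theorem count_dollar_word (n i : ℕ) : count dollar (word n i) = 1 := by
  simp [word, count_replicate, count_dollar_stem]

theorem cons_mem_stemLang_iff {c : Sym4} {w : List Sym4} :
    c :: w ∈ stemLang ↔ (c = a ∧ w ∈ stemLang) ∨ (c = percent ∧ w = [a, dollar]) := by
  constructor
  · rintro ⟨_ | k, hk⟩
    · obtain ⟨rfl, rfl⟩ := cons_eq_cons.1 hk
      simp
    · obtain ⟨rfl, rfl⟩ := cons_eq_cons.1 hk
      exact .inl ⟨rfl, k, rfl⟩
  · rintro (⟨rfl, k, rfl⟩ | ⟨rfl, rfl⟩)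
    exacts [⟨k + 1, rfl⟩, ⟨0, rfl⟩]

theorem stemLang_isRegular : stemLang.IsRegular := by
  refine Language.isRegular_of_leftQuotient_closed
    (S := {stemLang, {[a, dollar]}, {[dollar]}, {[]}, 0}) (Set.toFinite _) (by simp) ?_
  have hstem : ∀ c, stemLang.leftQuotient [c] =
      if c = a then stemLang else if c = percent then {[a, dollar]} else 0 := by
    intro c; ext w; split_ifs <;> simp_all [cons_mem_stemLang_iff]
  rintro K (rfl | rfl | rfl | rfl | rfl) c <;> cases c <;>
    simp [hstem, Language.leftQuotient_singleton_cons, Language.leftQuotient_singleton_nil]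

theorem exists_site_extension_iff {N I : ℕ} :
    (∃ x₁' x₂' z' : List Sym4, x₁' <:+ replicate N a ++ [percent] ∧ x₂' <+: [] ∧
      x₁' ++ x₂' ≠ [] ∧ stem I = x₁' ++ [a] ++ z' ++ [dollar] ++ x₂') ↔ I ≤ N := by
  constructor
  · rintro ⟨x₁', x₂', z', hx₁', hx₂', hne, hy⟩
    obtain rfl : x₂' = [] := prefix_nil.1 hx₂'
    rcases suffix_concat_iff.1 hx₁' with rfl | ⟨t, rfl, ht⟩
    · simp at hne
    obtain ⟨hle, ht⟩ := suffix_replicate_iff.1 ht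
    rw [ht] at hy
    have hI := (replicate_append_percent_inj.1 (by simpa [stem] using hy.symm)).1
    omega
  · intro h
    refine ⟨replicate I a ++ [percent], [], [], suffix_concat_iff.2 (.inr ⟨_, rfl, ?_⟩),
      prefix_rfl, by simp, by simp [stem]⟩
    exact suffix_replicate_iff.2 ⟨by simpa, by simp⟩

theorem word_mem_maxSdiStr {N I : ℕ} (h : N < I) : word N I ∈ maxSdiStr (stem N) (stem I) := by
  obtain ⟨J, rfl⟩ : ∃ J, I = J + 1 := ⟨I - 1, by omega⟩
  exact ⟨replicate N a ++ [percent], [a], replicate J a ++ [percent, a], [dollar], [],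
    by simp [stem], by simp [stem, replicate_succ], by simp, by simp,
    by simp [word, stem, replicate_succ], exists_site_extension_iff.not.2 (by omega)⟩

theorem site_eq_of_stem_eq {x₁ u v x₂ : List Sym4} {N : ℕ} (hx : stem N = x₁ ++ u ++ v ++ x₂)
    (hu : u ≠ []) (hv : v ≠ []) (hpercent : percent ∉ u ++ v) (hdollar : dollar ∈ u ++ v) :
    x₁ = replicate N a ++ [percent] ∧ u = [a] ∧ v = [dollar] ∧ x₂ = [] := by
  rw [append_assoc x₁ u v] at hx
  rcases infix_or_exists_of_append_append_eq_append_cons hx.symm hpercent with hinf | ⟨t, rfl, ht⟩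
  · simpa using hinf.subset hdollar
  have hlen := congrArg length ht
  have := length_pos_iff.2 hu
  have := length_pos_iff.2 hv
  simp only [length_cons, length_nil, length_append] at hlen
  obtain ⟨rfl, rfl⟩ : t = [] ∧ x₂ = [] := by simp only [← length_eq_zero_iff]; omega
  obtain ⟨p, rfl⟩ := length_eq_one_iff.1 (by omega : u.length = 1)
  obtain ⟨q, rfl⟩ := length_eq_one_iff.1 (by omega : v.length = 1)
  simp_all

theorem eq_of_word_mem_maxSdiStr {n i N I : ℕ} (hw : word n i ∈ maxSdiStr (stem N) (stem I)) :
    n = N ∧ i = I ∧ N < I := by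
  obtain ⟨x₁, u, z, v, x₂, hx, hy, hu, hv, hw, hmax⟩ := hw
  have hcount : ∀ c,
      count c (word n i) + count c (u ++ v) = count c (stem N) + count c (stem I) := by
    intro c
    rw [hw, hx, hy]
    simp only [count_append]
    omega
  have hpercent : percent ∉ u ++ v := by
    have := hcount percent
    rw [count_percent_word, count_percent_stem, count_percent_stem] at this
    rw [← count_eq_zero]
    omega
  have hdollar : dollar ∈ u ++ v := by
    have := hcount dollar
    rw [count_dollar_word, count_dollar_stem, count_dollar_stem] at this
    rw [← count_pos_iff]
    omega
  obtain ⟨rfl, rfl, rfl, rfl⟩ := site_eq_of_stem_eq hx hu hv hpercent hdollar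
  have hlt : N < I := not_le.1 (exists_site_extension_iff.not.1 hmax)
  have hword : word n i = word N I := by rw [hw, word, hy]; simp
  exact ⟨(word_inj.1 hword).1, (word_inj.1 hword).2, hlt⟩

theorem word_mem_maxSdiLang_iff {n i : ℕ} : word n i ∈ maxSdiLang stemLang stemLang ↔ n < i := by
  constructor
  · rintro ⟨_, ⟨N, rfl⟩, _, ⟨I, rfl⟩, hw⟩
    obtain ⟨rfl, rfl, h⟩ := eq_of_word_mem_maxSdiStr hw
    exact h
  · exact fun h => ⟨_, ⟨n, rfl⟩, _, ⟨i, rfl⟩, word_mem_maxSdiStr h⟩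

theorem stem_mem_leftQuotient_maxSdiLang_iff {n i : ℕ} :
    stem i ∈ Language.leftQuotient (maxSdiLang stemLang stemLang) (replicate n a ++ [percent]) ↔
      n < i := by
  change replicate n a ++ [percent] ++ stem i ∈ maxSdiLang stemLang stemLang ↔ n < i
  rw [append_assoc, singleton_append]
  exact word_mem_maxSdiLang_iff

theorem maxSdiLang_stemLang_not_isRegular :
    ¬ Language.IsRegular (maxSdiLang stemLang stemLang) := by
  refine Language.not_isRegular_of_injective_leftQuotient
    (f := fun n => replicate n a ++ [percent]) (.of_lt_imp_ne fun n m hnm heq => ?_)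
  have h := stem_mem_leftQuotient_maxSdiLang_iff.2 (Nat.lt_succ_self n)
  simp only [Function.comp_apply] at heq
  rw [heq, stem_mem_leftQuotient_maxSdiLang_iff] at h
  omega

end MaxSdiNotRegular

/-- Maximal site-directed insertion does not preserve regularity. -/
theorem maxSdi_not_regular :
    ∃ L₁ L₂ : Language Sym4, L₁.IsRegular ∧ L₂.IsRegular ∧
      ¬ Language.IsRegular (maxSdiLang L₁ L₂) :=
  ⟨_, _, MaxSdiNotRegular.stemLang_isRegular, MaxSdiNotRegular.stemLang_isRegular,
    MaxSdiNotRegular.maxSdiLang_stemLang_not_isRegular⟩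
end

section
/- There exist regular languages L₁ and L₂ (over the alphabet Σ = {a, b, $, %}) such that L₁ ←min-sdi L₂ is not regular. -/
instance : Fintype Sym4 where
  elems := {Sym4.a, Sym4.b, Sym4.dollar, Sym4.percent}
  complete := fun x => by cases x <;> simp

/-!
Take `L = b a* b a* b` over two distinct letters. A word `w = b aⁱ b aʲ b` obtained by minimal
site-directed insertion of `y ∈ L` into `x ∈ L` has only three `b`s, which `y` already supplies;
hence `w = y` and `x = uv`, so one of the unbordered words `u`, `v` carries two `b`s. An unbordered
prefix `b aⁱ b aᵗ` of `y` needs `t > i` (otherwise `b aᵗ` is a border), and dually for suffixes;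
so `b aⁱ b aʲ b` is produced exactly when `i ≠ j`. The words `b aⁱ` are then pairwise separated by
the suffixes `b aⁱ b`, and Myhill–Nerode rules out regularity.
-/

open List

section Unbordered

variable {α : Type}

def Unbordered (u : List α) : Prop :=
  ∀ s, s <+: u → s <:+ u → s = [] ∨ s = u

theorem mem_minSdiStr_iff {x y w : List α} :
    w ∈ minSdiStr x y ↔ ∃ x₁ u z v x₂ : List α,
      x = x₁ ++ u ++ v ++ x₂ ∧ y = u ++ z ++ v ∧ u ≠ [] ∧ v ≠ [] ∧
      w = x₁ ++ u ++ z ++ v ++ x₂ ∧ Unbordered u ∧ Unbordered v := by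
  have hu (u : List α) : (∀ s, s <:+ u → s ≠ [] → s ≠ u → ¬ s <+: u) ↔ Unbordered u :=
    forall_congr' fun s => by tauto
  have hv (v : List α) : (∀ p, p <+: v → p ≠ [] → p ≠ v → ¬ p <:+ v) ↔ Unbordered v :=
    forall_congr' fun s => by tauto
  simp only [minSdiStr, Set.mem_ofPred_eq, hu, hv]

theorem Unbordered.reverse {u : List α} (h : Unbordered u) : Unbordered u.reverse := by
  intro s hp hs
  have := h s.reverse (by rwa [← reverse_suffix, reverse_reverse])
    (by rwa [← reverse_prefix, reverse_reverse])
  simpa [reverse_eq_iff] using this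

theorem unbordered_singleton (c : α) : Unbordered [c] := by
  intro s hp _
  rcases prefix_cons_iff.1 hp with h | ⟨t, rfl, ht⟩
  · exact .inl h
  · exact .inr (by simpa using ht)

theorem not_unbordered_cons_append_cons {c : α} {p s : List α} (h : s <+: p) :
    ¬ Unbordered (c :: (p ++ c :: s)) := by
  intro hu
  rcases hu (c :: s) (cons_prefix_cons.2 ⟨rfl, prefix_append_of_prefix h⟩)
    suffix_cons_append with h | h
  · simp at h
  · have := congrArg length h
    simp at this
    omega

end Unbordered

section Replicate

variable {α : Type} {a b : α}

theorem List.eq_nil_of_prefix_cons {c : α} {l t : List α} (h : l <+: c :: t) (hc : c ∉ l) :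
    l = [] := by
  rcases prefix_cons_iff.1 h with h | ⟨t, rfl, -⟩
  · exact h
  · simp at hc

theorem List.eq_nil_of_suffix_concat {c : α} {l t : List α} (h : l <:+ t ++ [c]) (hc : c ∉ l) :
    l = [] := by
  have h' : l.reverse <+: c :: t.reverse := by simpa using reverse_prefix.2 h
  simpa using eq_nil_of_prefix_cons h' (by simpa using hc)

theorem List.cons_suffix_of_cons_suffix_replicate_append {c : α} {s l : List α} (hc : c ≠ a) :
    ∀ {i : ℕ}, c :: s <:+ replicate i a ++ l → c :: s <:+ l
  | 0, h => h
  | i + 1, h => by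
    rcases suffix_cons_iff.1 h with h | h
    · exact absurd (cons.inj h).1 hc
    · exact cons_suffix_of_cons_suffix_replicate_append hc h

theorem unbordered_cons_replicate_append_cons_replicate (hab : a ≠ b) {i t : ℕ} (hit : i < t) :
    Unbordered (b :: (replicate i a ++ b :: replicate t a)) := by
  intro s hp hs
  rcases suffix_cons_iff.1 hs with rfl | hs
  · exact .inr rfl
  refine .inl ?_
  rcases prefix_cons_iff.1 hp with h | ⟨s, rfl, hs'⟩
  · exact h
  exfalso
  rcases suffix_cons_iff.1 (cons_suffix_of_cons_suffix_replicate_append hab.symm hs) with h | h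
  · -- the only candidate border is `b aᵗ`, which has an `a` where `u` has its second `b`
    obtain rfl := (cons.inj h).2
    have : replicate i a ++ [a] <+: replicate i a ++ b :: replicate t a := by
      rw [← replicate_succ']
      exact (prefix_replicate_iff.2 ⟨by simp; omega, by simp⟩).trans hs'
    exact hab (by simpa using this)
  · exact hab (eq_of_mem_replicate (h.subset mem_cons_self)).symm

end Replicate

theorem Language.not_isRegular_of_injective_leftQuotient_s8 {α : Type} {L : Language α}
    {f : ℕ → List α} (hf : Function.Injective (L.leftQuotient ∘ f)) : ¬ L.IsRegular := fun h =>
  Set.infinite_range_of_injective hf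
    (h.finite_range_leftQuotient.subset (Set.range_comp_subset_range f _))

section Blocks

variable {α : Type} {a b : α}

variable (a b) in
def blocks (i j : ℕ) : List α := b :: (replicate i a ++ b :: (replicate j a ++ [b]))

variable (a b) in
def blocksLang : Language α := {w | ∃ i j, w = blocks a b i j}

theorem reverse_blocks (i j : ℕ) : (blocks a b i j).reverse = blocks a b j i := by
  simp [blocks]

theorem count_blocks [BEq α] [LawfulBEq α] (hab : a ≠ b) (i j : ℕ) :
    (blocks a b i j).count b = 3 := by
  simp [blocks, count_replicate, hab]

theorem not_unbordered_of_prefix_blocks [BEq α] [LawfulBEq α] (hab : a ≠ b) {i j : ℕ}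
    {u : List α} (hu : u <+: blocks a b i j) (hcount : 2 ≤ u.count b) (hji : j ≤ i) :
    ¬ Unbordered u := by
  have hlen : i + 2 ≤ u.length := by
    by_contra! hlt
    have : u <+: b :: replicate i a := prefix_of_prefix_length_le hu ⟨_, rfl⟩ (by simp; omega)
    have := this.sublist.count_le b
    simp [count_replicate, hab] at this
    omega
  obtain ⟨u', rfl⟩ := prefix_of_prefix_length_le (l₁ := b :: (replicate i a ++ [b]))
    ⟨replicate j a ++ [b], by simp [blocks]⟩ hu (by simp; omega)
  have hu' : u' <+: replicate j a ++ [b] := by simpa [blocks] using hu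
  rcases prefix_concat_iff.1 hu' with rfl | hu'
  · simpa using not_unbordered_cons_append_cons (c := b) (p := replicate i a ++ b :: replicate j a)
      nil_prefix
  · simpa using not_unbordered_cons_append_cons (c := b)
      (hu'.trans (prefix_replicate_iff.2 ⟨by simp [hji], by simp⟩) : u' <+: replicate i a)

theorem blocks_mem_minSdiLang_of_lt (hab : a ≠ b) {i j : ℕ} (hij : i < j) :
    blocks a b i j ∈ minSdiLang (blocksLang a b) (blocksLang a b) := by
  obtain ⟨k, rfl⟩ : ∃ k, j = i + 1 + k := ⟨j - (i + 1), by omega⟩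
  refine ⟨blocks a b i (i + 1), ⟨_, _, rfl⟩, blocks a b i (i + 1 + k), ⟨_, _, rfl⟩,
    mem_minSdiStr_iff.2 ⟨[], b :: (replicate i a ++ b :: replicate (i + 1) a), replicate k a,
      [b], [], by simp [blocks], by simp [blocks, replicate_add], by simp, by simp,
      by simp [blocks, replicate_add],
      unbordered_cons_replicate_append_cons_replicate hab (by omega), unbordered_singleton b⟩⟩

theorem blocks_mem_minSdiLang_of_gt (hab : a ≠ b) {i j : ℕ} (hji : j < i) :
    blocks a b i j ∈ minSdiLang (blocksLang a b) (blocksLang a b) := by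
  obtain ⟨k, rfl⟩ : ∃ k, i = k + (j + 1) := ⟨i - (j + 1), by omega⟩
  have hv := (unbordered_cons_replicate_append_cons_replicate hab (Nat.lt_succ_self j)).reverse
  refine ⟨blocks a b (j + 1) j, ⟨_, _, rfl⟩, blocks a b (k + (j + 1)) j, ⟨_, _, rfl⟩,
    mem_minSdiStr_iff.2 ⟨[], [b], replicate k a, replicate (j + 1) a ++ b :: (replicate j a ++ [b]),
      [], by simp [blocks], by simp [blocks, replicate_add], by simp, by simp,
      by simp [blocks, replicate_add], unbordered_singleton b, by simpa using hv⟩⟩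

theorem blocks_self_not_mem_minSdiLang (hab : a ≠ b) (m : ℕ) :
    blocks a b m m ∉ minSdiLang (blocksLang a b) (blocksLang a b) := by
  classical
  rintro ⟨_, ⟨n, p, rfl⟩, _, ⟨i, j, rfl⟩, hw⟩
  obtain ⟨x₁, u, z, v, x₂, hx, hy, -, -, hw, hu, hv⟩ := mem_minSdiStr_iff.1 hw
  -- `y` already carries all three `b`s of `w`, so the context `x₁, x₂` is empty
  have hcount := congrArg (count b) hw
  rw [show x₁ ++ u ++ z ++ v ++ x₂ = x₁ ++ (u ++ z ++ v) ++ x₂ by simp, ← hy] at hcount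
  simp only [count_append, count_blocks hab] at hcount
  obtain rfl : x₁ = [] := eq_nil_of_prefix_cons (t := replicate m a ++ b :: (replicate m a ++ [b]))
    (by rw [← blocks, hw]; simp) (count_eq_zero.1 (by omega))
  obtain rfl : x₂ = [] := eq_nil_of_suffix_concat (t := b :: (replicate m a ++ b :: replicate m a))
    (by rw [show _ ++ [b] = blocks a b m m by simp [blocks], hw]; exact suffix_append _ _)
    (count_eq_zero.1 (by omega))
  simp only [nil_append, append_nil] at hx hw
  have huv : u.count b + v.count b = 3 := by
    simpa [count_blocks hab] using (congrArg (count b) hx).symm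
  rcases (by omega : 2 ≤ u.count b ∨ 2 ≤ v.count b) with h | h
  · exact not_unbordered_of_prefix_blocks hab (by rw [hw, append_assoc]; exact prefix_append _ _)
      h le_rfl hu
  · refine not_unbordered_of_prefix_blocks hab (i := m) (j := m) ?_ (by simpa using h) le_rfl
      hv.reverse
    rw [← reverse_blocks, reverse_prefix, hw]
    exact suffix_append _ _

theorem blocks_mem_minSdiLang_iff (hab : a ≠ b) {i j : ℕ} :
    blocks a b i j ∈ minSdiLang (blocksLang a b) (blocksLang a b) ↔ i ≠ j := by
  refine ⟨?_, fun h => h.lt_or_gt.elim (blocks_mem_minSdiLang_of_lt hab)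
    (blocks_mem_minSdiLang_of_gt hab)⟩
  rintro h rfl
  exact blocks_self_not_mem_minSdiLang hab i h

theorem not_isRegular_minSdiLang_blocksLang (hab : a ≠ b) :
    ¬ Language.IsRegular (minSdiLang (blocksLang a b) (blocksLang a b)) := by
  refine Language.not_isRegular_of_injective_leftQuotient_s8 (f := fun i => b :: replicate i a)
    fun i i' h => ?_
  have key : blocks a b i' i ∈ minSdiLang (blocksLang a b) (blocksLang a b) ↔
      blocks a b i i ∈ minSdiLang (blocksLang a b) (blocksLang a b) :=
    (Set.ext_iff.1 h (b :: (replicate i a ++ [b]))).symm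
  simpa [blocks_mem_minSdiLang_iff hab, eq_comm] using key

end Blocks

inductive BlocksState
  | start | firstRun | secondRun | accept | reject
  deriving DecidableEq

instance : Fintype BlocksState where
  elems := {.start, .firstRun, .secondRun, .accept, .reject}
  complete q := by cases q <;> simp

section BlocksDFA

variable {α : Type} {a b : α} [DecidableEq α]

namespace BlocksState

variable (a b) in
def step : BlocksState → α → BlocksState
  | start, c => if c = b then firstRun else reject
  | firstRun, c => if c = a then firstRun else if c = b then secondRun else reject
  | secondRun, c => if c = a then secondRun else if c = b then accept else reject
  | _, _ => reject

-- the invariant of `blocksDFA`: every word leading to `q` lies in `q.words a b`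
variable (a b) in
def words : BlocksState → Set (List α)
  | start => {[]}
  | firstRun => {w | ∃ i, w = b :: replicate i a}
  | secondRun => {w | ∃ i j, w = b :: (replicate i a ++ b :: replicate j a)}
  | accept => blocksLang a b
  | reject => Set.univ

theorem append_singleton_mem_words_step {q : BlocksState} {w : List α} (hw : w ∈ q.words a b)
    (c : α) : w ++ [c] ∈ (q.step a b c).words a b := by
  cases q with
  | start =>
    obtain rfl : w = [] := hw
    simp only [step]
    split_ifs with hcb
    · exact ⟨0, by simp [hcb]⟩
    · trivial
  | firstRun =>
    obtain ⟨i, rfl⟩ := hw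
    simp only [step]
    split_ifs with hca hcb
    · exact ⟨i + 1, by simp [hca, replicate_succ']⟩
    · exact ⟨i, 0, by simp [hcb]⟩
    · trivial
  | secondRun =>
    obtain ⟨i, j, rfl⟩ := hw
    simp only [step]
    split_ifs with hca hcb
    · exact ⟨i, j + 1, by simp [hca, replicate_succ']⟩
    · exact ⟨i, j, by simp [blocks, hcb]⟩
    · trivial
  | accept | reject => trivial

end BlocksState

open BlocksState

variable (a b) in
def blocksDFA : DFA α BlocksState := ⟨step a b, start, {accept}⟩

theorem mem_words_blocksDFA_eval (w : List α) : w ∈ ((blocksDFA a b).eval w).words a b := by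
  induction w using reverseRecOn with
  | nil => rfl
  | append_singleton w c ih =>
    rw [DFA.eval_append_singleton]
    exact append_singleton_mem_words_step ih c

theorem blocksDFA_evalFrom_replicate {q : BlocksState} (hq : (blocksDFA a b).step q a = q)
    (n : ℕ) : (blocksDFA a b).evalFrom q (replicate n a) = q := by
  induction n with
  | zero => rfl
  | succ n ih => rw [replicate_succ, DFA.evalFrom_cons, hq, ih]

theorem blocksDFA_eval_blocks (hab : a ≠ b) (i j : ℕ) :
    (blocksDFA a b).eval (blocks a b i j) = accept := by
  have hstart : (blocksDFA a b).step start b = firstRun := if_pos rfl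
  have hfirst : (blocksDFA a b).step firstRun b = secondRun := (if_neg hab.symm).trans (if_pos rfl)
  have hsecond : (blocksDFA a b).step secondRun b = accept := (if_neg hab.symm).trans (if_pos rfl)
  have hfirstLoop : (blocksDFA a b).step firstRun a = firstRun := if_pos rfl
  have hsecondLoop : (blocksDFA a b).step secondRun a = secondRun := if_pos rfl
  rw [DFA.eval, blocks, DFA.evalFrom_cons, show (blocksDFA a b).start = start from rfl, hstart,
    DFA.evalFrom_of_append, blocksDFA_evalFrom_replicate hfirstLoop, DFA.evalFrom_cons, hfirst,
    DFA.evalFrom_of_append, blocksDFA_evalFrom_replicate hsecondLoop, DFA.evalFrom_singleton,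
    hsecond]

theorem accepts_blocksDFA (hab : a ≠ b) : (blocksDFA a b).accepts = blocksLang a b := by
  ext w
  refine ⟨fun h => ?_, ?_⟩
  · have := mem_words_blocksDFA_eval (a := a) (b := b) w
    rwa [show (blocksDFA a b).eval w = accept from h] at this
  · rintro ⟨i, j, rfl⟩
    exact blocksDFA_eval_blocks hab i j

end BlocksDFA

theorem isRegular_blocksLang {α : Type} {a b : α} (hab : a ≠ b) : (blocksLang a b).IsRegular := by
  classical
  exact ⟨BlocksState, inferInstance, blocksDFA a b, accepts_blocksDFA hab⟩

/-- Minimal site-directed insertion does not preserve regularity. -/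
theorem minSdi_not_regular :
    ∃ L₁ L₂ : Language Sym4, L₁.IsRegular ∧ L₂.IsRegular ∧
      ¬ Language.IsRegular (minSdiLang L₁ L₂) := by
  have hab : Sym4.a ≠ Sym4.b := by decide
  exact ⟨blocksLang Sym4.a Sym4.b, blocksLang Sym4.a Sym4.b, isRegular_blocksLang hab,
    isRegular_blocksLang hab, not_isRegular_minSdiLang_blocksLang hab⟩
end

section
/- For every language L ⊆ Σ*: L ←max-sdi Σ⁺ = L ←sdi Σ⁺ and L ←min-sdi Σ⁺ = L ←sdi Σ⁺, where Σ⁺ is the set of all nonempty strings over Σ. -/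
/-- Maximal and minimal SDI with the language of all nonempty strings
agree with unrestricted SDI. -/
theorem maxMinSdi_sigmaPlus {α : Type} (L : Language α) :
    maxSdiLang L { w : List α | w ≠ [] } = sdiLang L { w : List α | w ≠ [] } ∧
    minSdiLang L { w : List α | w ≠ [] } = sdiLang L { w : List α | w ≠ [] } := by
  constructor
  · ext w
    constructor
    · rintro ⟨x, hx, y, hy, x₁, u, z, v, x₂, h1, h2, hu, hv, h3, -⟩
      exact ⟨x, hx, y, hy, x₁, u, z, v, x₂, h1, h2, hu, hv, h3⟩
    · rintro ⟨x, hx, y, hy, x₁, u, z, v, x₂, h1, h2, hu, hv, h3⟩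
      refine ⟨x, hx, x₁ ++ u ++ z ++ v ++ x₂, ?_,
        [], x₁ ++ u, z, v ++ x₂, [], ?_, by simp, by simp [hu], by simp [hv], by simp [h3], ?_⟩
      · simp [Set.mem_setOf_eq, hu]
      · simp [h1]
      · rintro ⟨x₁', x₂', z', hs, hp, hne, -⟩
        rw [List.suffix_nil] at hs
        rw [List.prefix_nil] at hp
        exact hne (by simp [hs, hp])
  · ext w
    constructor
    · rintro ⟨x, hx, y, hy, x₁, u, z, v, x₂, h1, h2, hu, hv, h3, -, -⟩
      exact ⟨x, hx, y, hy, x₁, u, z, v, x₂, h1, h2, hu, hv, h3⟩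
    · rintro ⟨x, hx, y, hy, x₁, u, z, v, x₂, h1, h2, hu, hv, h3⟩
      obtain ⟨u₁, a, rfl⟩ := (u.eq_nil_or_concat').resolve_left hu
      obtain ⟨b, v₁, rfl⟩ := List.exists_cons_of_ne_nil hv
      refine ⟨x, hx, [a] ++ z ++ [b], by simp [Set.mem_setOf_eq],
        x₁ ++ u₁, [a], z, [b], v₁ ++ x₂, by simp [h1], rfl, by simp, by simp, by simp [h3], ?_, ?_⟩
      · intro s hs hne hna
        exfalso
        have hl := hs.length_le
        simp at hl
        interval_cases h : s.length
        · exact hne (List.eq_nil_of_length_eq_zero h)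
        · exact hna (List.IsSuffix.eq_of_length hs (by simp [h]))
      · intro p hp hne hna _
        have hl := hp.length_le
        simp at hl
        interval_cases h : p.length
        · exact hne (List.eq_nil_of_length_eq_zero h)
        · exact hna (List.IsPrefix.eq_of_length hp (by simp [h]))
end

section
/- For any language R ⊆ Σ*, there exist languages X₁, X₂ ⊆ Σ* with X₁ ←sdi X₂ = R if and only if every string of R has length at least two. -/
/-- The equation `X₁ ←sdi X₂ = R` has a solution iff every string of `R`
has length at least two. -/
theorem sdi_two_variable_equation {α : Type} (R : Language α) :
    (∃ X₁ X₂ : Set (List α), sdiLang X₁ X₂ = R) ↔ ∀ w ∈ R, 2 ≤ w.length := by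
  constructor
  · rintro ⟨X₁, X₂, rfl⟩ w ⟨x, _, y, _, x₁, u, z, v, x₂, _, _, hu, hv, rfl⟩
    have hu1 : 1 ≤ u.length := List.length_pos_iff.mpr hu
    have hv1 : 1 ≤ v.length := List.length_pos_iff.mpr hv
    simp only [List.length_append]
    omega
  · intro hR
    refine ⟨{ x | ∃ w ∈ R, ∃ a z b, w = [a] ++ z ++ [b] ∧ x = [a, b] }, R, ?_⟩
    ext w
    constructor
    · rintro ⟨x, ⟨w', hw', a, z0, b, hw'eq, rfl⟩, y, hy, x₁, u, z, v, x₂, hx, hyeq, hu, hv, rfl⟩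
      have hu1 : 1 ≤ u.length := List.length_pos_iff.mpr hu
      have hv1 : 1 ≤ v.length := List.length_pos_iff.mpr hv
      have hlen : x₁.length + u.length + v.length + x₂.length = 2 := by
        have := congrArg List.length hx
        simp only [List.length_append, List.length_cons, List.length_nil] at this
        omega
      have hx₁ : x₁ = [] := by
        have : x₁.length = 0 := by omega
        exact List.length_eq_zero_iff.mp this
      have hx₂ : x₂ = [] := by
        have : x₂.length = 0 := by omega
        exact List.length_eq_zero_iff.mp this
      obtain ⟨c, hc⟩ := List.length_eq_one_iff.mp (show u.length = 1 by omega)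
      obtain ⟨d, hd⟩ := List.length_eq_one_iff.mp (show v.length = 1 by omega)
      subst hx₁ hx₂ hc hd
      simp only [List.nil_append, List.append_nil] at hx ⊢
      have : a = c ∧ b = d := by simpa using hx
      obtain ⟨rfl, rfl⟩ := this
      subst hyeq
      simpa using hy
    · intro hw
      have hlen := hR w hw
      obtain ⟨a, t, rfl⟩ : ∃ a t, w = a :: t := by
        cases w with
        | nil => simp at hlen
        | cons a t => exact ⟨a, t, rfl⟩
      have ht : t ≠ [] := by
        rintro rfl; simp at hlen
      obtain ⟨z, b, rfl⟩ : ∃ z b, t = z ++ [b] :=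
        ⟨t.dropLast, t.getLast ht, (List.dropLast_append_getLast ht).symm⟩
      refine ⟨[a, b], ⟨a :: (z ++ [b]), hw, a, z, b, by simp, rfl⟩,
        a :: (z ++ [b]), hw, [], [a], z, [b], [], by simp, by simp, by simp, by simp, by simp⟩
end

section
/- For all strings x, y ∈ Σ*: x ←max-sdi y = { x₁uzvx₂ : x = x₁uvx₂, y = uzv, u ≠ ε, v ≠ ε, no suffix of x₁u of length greater than |u| is a prefix of uz, and no prefix of vx₂ of length greater than |v| is a suffix of zv }. -/
/-- Equivalent characterization of maximal site-directed insertion. -/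
theorem maxSdi_characterization {α : Type} (x y : List α) :
    maxSdiStr x y =
      { w | ∃ x₁ u z v x₂ : List α,
          x = x₁ ++ u ++ v ++ x₂ ∧ y = u ++ z ++ v ∧ u ≠ [] ∧ v ≠ [] ∧
          w = x₁ ++ u ++ z ++ v ++ x₂ ∧
          (∀ s : List α, s <:+ (x₁ ++ u) → u.length < s.length → ¬ s <+: (u ++ z)) ∧
          (∀ p : List α, p <+: (v ++ x₂) → v.length < p.length → ¬ p <:+ (z ++ v)) } := by
  ext w
  simp only [maxSdiStr, Set.mem_setOf_eq]
  constructor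
  · rintro ⟨x₁, u, z, v, x₂, hx, hy, hu, hv, hw, hmax⟩
    refine ⟨x₁, u, z, v, x₂, hx, hy, hu, hv, hw, ?_, ?_⟩
    · intro s hsuf hlen hpre
      have husuf : u <:+ x₁ ++ u := List.suffix_append x₁ u
      have hus : u <:+ s := by
        rcases List.suffix_or_suffix_of_suffix husuf hsuf with h | h
        · exact h
        · have := h.length_le; omega
      obtain ⟨x₁', rfl⟩ := hus
      obtain ⟨t, ht⟩ := hsuf
      have ht' : t ++ x₁' = x₁ := by
        apply List.append_cancel_right (bs := u)
        simpa [List.append_assoc] using ht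
      obtain ⟨z', hz'⟩ := hpre
      have hx₁' : x₁' ≠ [] := by
        intro h; subst h; simp at hlen
      apply hmax
      refine ⟨x₁', [], z', ⟨t, ht'⟩, List.nil_prefix, by simpa using hx₁', ?_⟩
      rw [hy]
      have : u ++ z = x₁' ++ u ++ z' := hz'.symm
      simp only [List.append_nil]
      rw [this]
    · intro p hpre hlen hsuf
      have hvp : v <+: p := by
        rcases List.prefix_or_prefix_of_prefix (List.prefix_append v x₂) hpre with h | h
        · exact h
        · have := h.length_le; omega
      obtain ⟨x₂', rfl⟩ := hvp
      have hx₂' : x₂' <+: x₂ := by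
        obtain ⟨t, ht⟩ := hpre
        have ht2 : v ++ (x₂' ++ t) = v ++ x₂ := by simpa [List.append_assoc] using ht
        exact ⟨t, List.append_cancel_left ht2⟩
      obtain ⟨z', hz'⟩ := hsuf
      have hne : x₂' ≠ [] := by
        intro h; subst h; simp at hlen
      apply hmax
      refine ⟨[], x₂', z', List.nil_suffix, hx₂', by simpa using hne, ?_⟩
      rw [hy]
      have : z ++ v = z' ++ (v ++ x₂') := hz'.symm
      simp only [List.nil_append, List.append_assoc] at this ⊢
      rw [this]
  · rintro ⟨x₁, u, z, v, x₂, hx, hy, hu, hv, hw, h1, h2⟩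
    refine ⟨x₁, u, z, v, x₂, hx, hy, hu, hv, hw, ?_⟩
    rintro ⟨x₁', x₂', z', hs, hp, hne, hy'⟩
    by_cases hx₁ : x₁' = []
    · subst hx₁
      have hx₂ : x₂' ≠ [] := by simpa using hne
      have hzv : z ++ v = z' ++ (v ++ x₂') := by
        have : u ++ (z ++ v) = u ++ (z' ++ (v ++ x₂')) := by
          rw [← List.append_assoc, ← List.append_assoc, ← hy]
          simpa [List.append_assoc] using hy'
        exact List.append_cancel_left this
      refine h2 (v ++ x₂') ?_ ?_ ⟨z', hzv.symm⟩
      · obtain ⟨t, ht⟩ := hp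
        exact ⟨t, by simp [← ht, List.append_assoc]⟩
      · have := List.length_pos_iff.mpr hx₂
        simp; omega
    · have hs' : x₁' ++ u <:+ x₁ ++ u := by
        obtain ⟨t, ht⟩ := hs
        exact ⟨t, by simp [← ht, List.append_assoc]⟩
      have hlen : u.length < (x₁' ++ u).length := by
        have := List.length_pos_iff.mpr hx₁
        simp; omega
      have hp1 : x₁' ++ u <+: y := ⟨z' ++ v ++ x₂', by simpa [List.append_assoc] using hy'.symm⟩
      have hp2 : u ++ z <+: y := ⟨v, by simpa [List.append_assoc] using hy.symm⟩
      have hll : (x₁' ++ u).length ≤ (u ++ z).length := by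
        have e1 := congrArg List.length hy
        have e2 := congrArg List.length hy'
        simp at e1 e2 ⊢
        omega
      exact h1 (x₁' ++ u) hs' hlen (List.prefix_of_prefix_length_le hp1 hp2 hll)
end

section
/- Let x and y be unary strings over a one-letter alphabet {a}. If |x| ≥ |y| ≥ 2 then x ←max-sdi y = {x}; if |y| > |x| ≥ 2 then x ←max-sdi y = {y}; and if |x| < 2 or |y| < 2 then x ←max-sdi y = ∅. -/
lemma unitEq (l₁ l₂ : List Unit) (h : l₁.length = l₂.length) : l₁ = l₂ :=
  List.ext_getElem h (fun _ _ _ => Subsingleton.elim _ _)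

lemma notmax (x₁ u z v x₂ y : List Unit) (hy : y = u ++ z ++ v) (hz : z ≠ [])
    (hne : x₁ ≠ [] ∨ x₂ ≠ []) :
    ∃ x₁' x₂' z' : List Unit, x₁' <:+ x₁ ∧ x₂' <+: x₂ ∧
      x₁' ++ x₂' ≠ [] ∧ y = x₁' ++ u ++ z' ++ v ++ x₂' := by
  have hzl : 1 ≤ z.length := List.length_pos_iff.mpr hz
  rcases hne with h1 | h2
  · have h1l : 1 ≤ x₁.length := List.length_pos_iff.mpr h1
    refine ⟨[()], [], z.tail, ⟨x₁.dropLast, ?_⟩, List.nil_prefix, by simp, ?_⟩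
    · exact unitEq _ _ (by simp; omega)
    · apply unitEq; simp [hy]; omega
  · have h2l : 1 ≤ x₂.length := List.length_pos_iff.mpr h2
    refine ⟨[], [()], z.tail, List.nil_suffix, ⟨x₂.tail, ?_⟩, by simp, ?_⟩
    · exact unitEq _ _ (by simp; omega)
    · apply unitEq; simp [hy]; omega

/-- Maximal SDI of unary strings. -/
theorem maxSdi_unary (x y : List Unit) :
    (2 ≤ y.length → y.length ≤ x.length → maxSdiStr x y = {x}) ∧
    (2 ≤ x.length → x.length < y.length → maxSdiStr x y = {y}) ∧
    (x.length < 2 ∨ y.length < 2 → maxSdiStr x y = ∅) := by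
  refine ⟨?_, ?_, ?_⟩
  · intro hy2 hyx
    ext w
    simp only [Set.mem_singleton_iff]
    constructor
    · rintro ⟨x₁, u, z, v, x₂, hx, hy, hu, hv, hw, hmax⟩
      have hul : 1 ≤ u.length := List.length_pos_iff.mpr hu
      have hvl : 1 ≤ v.length := List.length_pos_iff.mpr hv
      have hxl : x.length = x₁.length + u.length + v.length + x₂.length := by
        simp [hx]; omega
      have hyl : y.length = u.length + z.length + v.length := by simp [hy]; omega
      have hz : z = [] := by
        by_contra hz
        have hzl : 1 ≤ z.length := List.length_pos_iff.mpr hz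
        have hne : x₁ ≠ [] ∨ x₂ ≠ [] := by
          by_contra h
          push_neg at h
          obtain ⟨h1, h2⟩ := h
          simp [h1, h2] at hxl
          omega
        exact hmax (notmax x₁ u z v x₂ y hy hz hne)
      subst hz
      apply unitEq
      simp [hw, hxl]; omega
    · rintro rfl
      refine ⟨[], [()], [], y.drop 1, w.drop y.length, ?_, ?_, by simp, ?_, ?_, ?_⟩
      · apply unitEq; simp; omega
      · apply unitEq; simp; omega
      · apply List.length_pos_iff.mp; simp; omega
      · apply unitEq; simp; omega
      · rintro ⟨x₁', x₂', z', hs, hp, hne, heq⟩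
        have h1 : x₁' = [] := List.suffix_nil.mp hs
        subst h1
        have hl := congrArg List.length heq
        simp at hl
        have h2 : x₂' = [] := List.eq_nil_of_length_eq_zero (by omega)
        simp [h2] at hne
  · intro hx2 hxy
    ext w
    simp only [Set.mem_singleton_iff]
    constructor
    · rintro ⟨x₁, u, z, v, x₂, hx, hy, hu, hv, hw, hmax⟩
      have hul : 1 ≤ u.length := List.length_pos_iff.mpr hu
      have hvl : 1 ≤ v.length := List.length_pos_iff.mpr hv
      have hxl : x.length = x₁.length + u.length + v.length + x₂.length := by
        simp [hx]; omega
      have hyl : y.length = u.length + z.length + v.length := by simp [hy]; omega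
      have hz : z ≠ [] := by
        intro h; subst h; simp at hyl; omega
      have h1 : x₁ = [] := by
        by_contra h1
        exact hmax (notmax x₁ u z v x₂ y hy hz (Or.inl h1))
      have h2 : x₂ = [] := by
        by_contra h2
        exact hmax (notmax x₁ u z v x₂ y hy hz (Or.inr h2))
      subst h1; subst h2
      simp at hw
      rw [hw, hy]
      simp
    · rintro rfl
      refine ⟨[], [()], List.replicate (w.length - x.length) (), x.drop 1, [], ?_, ?_, by simp, ?_, ?_, ?_⟩
      · apply unitEq; simp; omega
      · apply unitEq; simp; omega
      · apply List.length_pos_iff.mp; simp; omega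
      · apply unitEq; simp; omega
      · rintro ⟨x₁', x₂', z', hs, hp, hne, heq⟩
        have h1 : x₁' = [] := List.suffix_nil.mp hs
        have h2 : x₂' = [] := List.prefix_nil.mp hp
        simp [h1, h2] at hne
  · rintro h
    ext w
    simp only [Set.mem_empty_iff_false, iff_false]
    rintro ⟨x₁, u, z, v, x₂, hx, hy, hu, hv, hw, hmax⟩
    have hul : 1 ≤ u.length := List.length_pos_iff.mpr hu
    have hvl : 1 ≤ v.length := List.length_pos_iff.mpr hv
    have hxl : x.length = x₁.length + u.length + v.length + x₂.length := by
      simp [hx]; omega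
    have hyl : y.length = u.length + z.length + v.length := by simp [hy]; omega
    omega
end

section
/- Let x and y be unary strings over a one-letter alphabet {a}. If |x| ≥ 2 and |y| ≥ 2 then x ←min-sdi y = { a^{|x|+|y|-2} }; and if |x| < 2 or |y| < 2 then x ←min-sdi y = ∅. -/
lemma unit_list_eq_of_length {a b : List Unit} (h : a.length = b.length) : a = b := by
  have ha : a = List.replicate a.length () := by
    apply List.eq_replicate_of_mem; intro x _; rfl
  have hb : b = List.replicate b.length () := by
    apply List.eq_replicate_of_mem; intro x _; rfl
  rw [ha, hb, h]

/-- Minimal SDI of unary strings. -/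
theorem minSdi_unary (x y : List Unit) :
    (2 ≤ x.length → 2 ≤ y.length →
      minSdiStr x y = {List.replicate (x.length + y.length - 2) ()}) ∧
    (x.length < 2 ∨ y.length < 2 → minSdiStr x y = ∅) := by
  constructor
  · intro hx hy
    ext w
    simp only [Set.mem_singleton_iff]
    constructor
    · rintro ⟨x₁, u, z, v, x₂, hxe, hye, hu, hv, hwe, hub, hvb⟩
      apply unit_list_eq_of_length
      have hxl : x.length = x₁.length + u.length + v.length + x₂.length := by
        simp [hxe]; ring
      have hyl : y.length = u.length + z.length + v.length := by
        simp [hye]; ring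
      have hul : 1 ≤ u.length := List.length_pos_iff.mpr hu
      have hvl : 1 ≤ v.length := List.length_pos_iff.mpr hv
      have hwl : w.length = x₁.length + u.length + z.length + v.length + x₂.length := by
        simp [hwe]; ring
      have hu1 : u.length = 1 := by
        by_contra h1
        have h2 : 2 ≤ u.length := by omega
        have hsuf : [()] <:+ u :=
          ⟨List.replicate (u.length - 1) (), unit_list_eq_of_length (by simp; omega)⟩
        have hpre : [()] <+: u :=
          ⟨List.replicate (u.length - 1) (), unit_list_eq_of_length (by simp; omega)⟩
        exact hub [()] hsuf (by simp) (fun he => h1 (by rw [← he]; rfl)) hpre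
      have hv1 : v.length = 1 := by
        by_contra h1
        have h2 : 2 ≤ v.length := by omega
        have hsuf : [()] <:+ v :=
          ⟨List.replicate (v.length - 1) (), unit_list_eq_of_length (by simp; omega)⟩
        have hpre : [()] <+: v :=
          ⟨List.replicate (v.length - 1) (), unit_list_eq_of_length (by simp; omega)⟩
        exact hvb [()] hpre (by simp) (fun he => h1 (by rw [← he]; rfl)) hsuf
      simp only [List.length_replicate]
      omega
    · rintro rfl
      refine ⟨List.replicate (x.length - 2) (), [()], List.replicate (y.length - 2) (), [()], [],
        ?_, ?_, by simp, by simp, ?_, ?_, ?_⟩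
      · apply unit_list_eq_of_length; simp; omega
      · apply unit_list_eq_of_length; simp; omega
      · apply unit_list_eq_of_length; simp; omega
      · intro s hs hne hnu
        rcases hs with ⟨t, ht⟩
        have hl := congrArg List.length ht
        simp at hl
        have : s.length = 0 ∨ s.length = 1 := by omega
        rcases this with h | h
        · exact absurd (List.length_eq_zero_iff.mp h) hne
        · exact absurd (unit_list_eq_of_length (by simp [h])) hnu
      · intro p hp hne hnv
        rcases hp with ⟨t, ht⟩
        have hl := congrArg List.length ht
        simp at hl
        have : p.length = 0 ∨ p.length = 1 := by omega
        rcases this with h | h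
        · exact absurd (List.length_eq_zero_iff.mp h) hne
        · exact absurd (unit_list_eq_of_length (by simp [h])) hnv
  · intro h
    ext w
    simp only [Set.mem_empty_iff_false, iff_false]
    rintro ⟨x₁, u, z, v, x₂, hxe, hye, hu, hv, _⟩
    have hul : 1 ≤ u.length := List.length_pos_iff.mpr hu
    have hvl : 1 ≤ v.length := List.length_pos_iff.mpr hv
    have hxl : x.length = x₁.length + u.length + v.length + x₂.length := by simp [hxe]; ring
    have hyl : y.length = u.length + z.length + v.length := by simp [hye]; ring
    omega
end

section
/- For all positive integers m and n, there exist languages L₁ and L₂ over a binary alphabet such that L₁ is accepted by an NFA with m states, L₂ is accepted by an NFA with n states, and every NFA accepting L₁ ←a-sdi L₂ has at least mn + 2m states. -/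
/-!
Write `a = false` and `b = true`. An extended fooling set for `L` (Birget) is a family of pairs
`(xᵢ, yᵢ)` with `xᵢ yᵢ ∈ L` such that for `i ≠ j` one of `xᵢ yⱼ`, `xⱼ yᵢ` lies outside `L`. Picking,
for each `i`, a state reached on `xᵢ` from which `yᵢ` is accepted is then injective, so every NFA
for `L` has at least as many states as the family has pairs.

For `n = 1` take `L₁ = {w : m ∣ |w|_a}` and `L₂ = b*`. The insertion then yields the words with
`m ∣ |w|_a` that contain `bb`, and the `3m` pairs `(aⁱ bʲ, b²⁻ʲ aᵐ⁻ⁱ)` form an extended fooling set.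

For `n = k + 2` take `L₁ = (aᵐ)*` and `L₂ = (a bᵏ⁺¹)* a`. Both are recognised by automata running
around a cycle, and the insertion yields the words `aᵖ (a bᵏ⁺¹)ˢ⁺¹ a a^q` with `m ∣ p + q + 2`. Two
properties of these words separate the `mn + 2m` pairs of the fooling set: `|w|_b = (k + 1) t` and
`|w|_a + 1 ≡ t (mod m)` for some `t > 0`, and a factor `aa` never lies strictly between two `b`s.
-/

open List

section FoolingSet

variable {α σ ι : Type*}

def Language.IsExtendedFoolingSet (L : Language α) (x y : ι → List α) : Prop :=
  (∀ i, x i ++ y i ∈ L) ∧ ∀ i j, x i ++ y j ∈ L → x j ++ y i ∈ L → i = j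

theorem NFA.append_mem_accepts_iff (M : NFA α σ) {u v : List α} :
    u ++ v ∈ M.accepts ↔ ∃ s ∈ M.evalFrom M.start u, v ∈ M.acceptsFrom {s} := by
  rw [NFA.accepts_eq_acceptsFrom_start, NFA.append_mem_acceptsFrom]
  simp only [NFA.mem_acceptsFrom]
  constructor
  · rintro ⟨q, hq, hqu⟩
    obtain ⟨s, hs, hqs⟩ := NFA.mem_evalFrom_iff_exists.1 hqu
    exact ⟨s, hs, q, hq, hqs⟩
  · rintro ⟨s, hs, q, hq, hqs⟩
    exact ⟨q, hq, NFA.mem_evalFrom_iff_exists.2 ⟨s, hs, hqs⟩⟩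

theorem NFA.card_le_of_isExtendedFoolingSet [Fintype ι] [Fintype σ] (M : NFA α σ)
    {x y : ι → List α} (h : M.accepts.IsExtendedFoolingSet x y) :
    Fintype.card ι ≤ Fintype.card σ := by
  choose f hf using fun i => M.append_mem_accepts_iff.1 (h.1 i)
  refine Fintype.card_le_of_injective f fun i j hij => h.2 i j ?_ ?_
  · exact M.append_mem_accepts_iff.2 ⟨f i, (hf i).1, hij ▸ (hf j).2⟩
  · exact M.append_mem_accepts_iff.2 ⟨f j, (hf j).1, hij ▸ (hf i).2⟩

end FoolingSet

theorem Nat.eq_of_add_mul_eq_add_mul {m i j c d : ℕ} (hi : i < m) (hj : j < m)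
    (h : i + m * c = j + m * d) : i = j :=
  Nat.ModEq.eq_of_lt_of_lt (by simpa [Nat.ModEq] using congrArg (· % m) h) hi hj

theorem List.replicate_append_replicate_append {α : Type*} (p q : ℕ) (c : α) (l : List α) :
    replicate p c ++ (replicate q c ++ l) = replicate (p + q) c ++ l := by
  rw [← append_assoc, replicate_append_replicate]

theorem List.isPrefix_or_isSuffix_of_eq_append_pair_append {α : Type*} {c : α} {p q : ℕ}
    {M u v : List α} (hM : ¬ [c, c] <:+: M)
    (h : replicate p c ++ M ++ replicate q c = u ++ [c, c] ++ v) :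
    u <+: replicate p c ∨ v <:+ replicate q c := by
  rw [append_assoc, append_assoc] at h
  rcases append_eq_append_iff.1 h.symm with ⟨e, hp, -⟩ | ⟨e, rfl, he⟩
  · exact .inl ⟨e, hp.symm⟩
  rcases append_eq_append_iff.1 he with ⟨e', -, hq⟩ | ⟨e', rfl, he'⟩
  · exact .inr ⟨e' ++ [c, c], by simp [hq]⟩
  rcases append_eq_append_iff.1 he' with ⟨e'', rfl, -⟩ | ⟨e'', -, hq⟩
  · exact absurd ⟨e, e'', by simp⟩ hM
  · exact .inr ⟨e'', hq.symm⟩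

section Automata

variable {α : Type*} {n : ℕ}

theorem NFA.evalFrom_empty {σ : Type*} (M : NFA α σ) (w : List α) : M.evalFrom ∅ w = ∅ := by
  rw [NFA.evalFrom_eq_biUnion_singleton]
  simp

def cycleWord (f : ZMod n → α) : ZMod n → ℕ → List α
  | _, 0 => []
  | q, l + 1 => f q :: cycleWord f (q + 1) l

theorem cycleWord_add (f : ZMod n → α) (q : ZMod n) (a b : ℕ) :
    cycleWord f q (a + b) = cycleWord f q a ++ cycleWord f (q + a) b := by
  induction a generalizing q with
  | zero => simp [cycleWord]
  | succ a ih =>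
    rw [Nat.succ_add, cycleWord, cycleWord, ih]
    simp [add_assoc, add_comm (1 : ZMod n)]

theorem cycleWord_eq_replicate {f : ZMod n → α} {q : ZMod n} {l : ℕ} {c : α}
    (h : ∀ i < l, f (q + i) = c) : cycleWord f q l = replicate l c := by
  induction l generalizing q with
  | zero => rfl
  | succ l ih =>
    rw [cycleWord, replicate_succ, ih fun i hi => ?_, ← h 0 l.succ_pos, Nat.cast_zero, add_zero]
    simpa [add_assoc, add_comm (1 : ZMod n)] using h (i + 1) (by omega)

def cycleNFA [DecidableEq α] (f : ZMod n → α) (r : ZMod n) : NFA α (ZMod n) where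
  step q c := if c = f q then {q + 1} else ∅
  start := {0}
  accept := {r}

theorem cycleNFA_evalFrom [DecidableEq α] (f : ZMod n → α) (r q : ZMod n) (w : List α) :
    (cycleNFA f r).evalFrom {q} w =
      if w = cycleWord f q w.length then {q + w.length} else ∅ := by
  induction w generalizing q with
  | nil => simp [cycleWord]
  | cons c w ih =>
    rw [NFA.evalFrom_cons, NFA.stepSet_singleton]
    by_cases hc : c = f q
    · rw [show (cycleNFA f r).step q c = {q + 1} from if_pos hc, ih]
      simp [cycleWord, hc, add_assoc, add_comm (1 : ZMod n)]
    · rw [show (cycleNFA f r).step q c = ∅ from if_neg hc, NFA.evalFrom_empty]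
      simp [cycleWord, hc]

theorem mem_cycleNFA_accepts [DecidableEq α] {f : ZMod n → α} {r : ZMod n} {w : List α} :
    w ∈ (cycleNFA f r).accepts ↔ w = cycleWord f 0 w.length ∧ (w.length : ZMod n) = r := by
  rw [NFA.mem_accepts, show (cycleNFA f r).start = {0} from rfl, cycleNFA_evalFrom]
  by_cases hw : w = cycleWord f 0 w.length
  · rw [if_pos hw]
    simp [cycleNFA, eq_comm, iff_true_intro hw]
  · rw [if_neg hw]
    simp [hw]

theorem mem_cycleNFA_const_accepts [DecidableEq α] {c : α} {r : ZMod n} {w : List α} :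
    w ∈ (cycleNFA (fun _ => c) r).accepts ↔ (∀ e ∈ w, e = c) ∧ (w.length : ZMod n) = r := by
  rw [mem_cycleNFA_accepts, cycleWord_eq_replicate fun _ _ => rfl, eq_replicate_length]

def countNFA [DecidableEq α] (n : ℕ) (c : α) : NFA α (ZMod n) where
  step q d := {if d = c then q + 1 else q}
  start := {0}
  accept := {0}

theorem countNFA_evalFrom [DecidableEq α] (c : α) (q : ZMod n) (w : List α) :
    (countNFA n c).evalFrom {q} w = {q + w.count c} := by
  induction w generalizing q with
  | nil => simp
  | cons d w ih =>
    rw [NFA.evalFrom_cons, NFA.stepSet_singleton,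
      show (countNFA n c).step q d = {if d = c then q + 1 else q} from rfl, ih]
    by_cases hd : d = c <;> simp [hd, add_assoc, add_comm (1 : ZMod n)]

theorem mem_countNFA_accepts [DecidableEq α] {c : α} {w : List α} :
    w ∈ (countNFA n c).accepts ↔ n ∣ w.count c := by
  rw [NFA.mem_accepts, show (countNFA n c).start = {0} from rfl, countNFA_evalFrom]
  simp [countNFA, eq_comm, ZMod.natCast_eq_zero_iff]

end Automata

namespace AsdiLowerBound

/-- `b*` -/
def bStar : Language Bool := (cycleNFA (fun _ : ZMod 1 => true) 0).accepts

theorem count_of_mem_asdiLang_bStar {m : ℕ} {w : List Bool}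
    (h : w ∈ asdiLang (countNFA m false).accepts bStar) :
    m ∣ w.count false ∧ 2 ≤ w.count true := by
  obtain ⟨x, hx, y, hy, x₁, x₂, z, c, d, rfl, rfl, rfl⟩ := h
  replace hx := mem_countNFA_accepts.1 hx
  obtain ⟨hy, -⟩ := mem_cycleNFA_const_accepts.1 hy
  have hc : c = true := hy c (by simp)
  have hd : d = true := hy d (by simp)
  have hz : z.count false = 0 := count_eq_zero.2 fun hz => by simpa using hy false (by simp [hz])
  subst hc hd
  simp only [count_append, count_singleton_self, hz] at hx ⊢
  exact ⟨by simpa using hx, by omega⟩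

def foolPrefix_bStar (m : ℕ) (p : Fin m × Fin 3) : List Bool :=
  replicate p.1 false ++ replicate p.2 true

def foolSuffix_bStar (m : ℕ) (p : Fin m × Fin 3) : List Bool :=
  replicate (2 - p.2) true ++ replicate (m - p.1) false

theorem isExtendedFoolingSet_bStar (m : ℕ) :
    Language.IsExtendedFoolingSet (asdiLang (countNFA m false).accepts bStar)
      (foolPrefix_bStar m) (foolSuffix_bStar m) := by
  refine ⟨fun ⟨i, j⟩ => ?_, fun ⟨i, j⟩ ⟨i', j'⟩ h₁ h₂ => ?_⟩
  · refine ⟨_, ?_, [true] ++ [] ++ [true], ?_, replicate i false, replicate (m - i) false, [],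
      true, true, rfl, rfl, ?_⟩
    · exact mem_countNFA_accepts.2 (by simp [Nat.add_sub_cancel' i.is_lt.le])
    · exact mem_cycleNFA_const_accepts.2 ⟨by simp, Subsingleton.elim _ _⟩
    · simp only [foolPrefix_bStar, foolSuffix_bStar, append_assoc]
      rw [← append_assoc (replicate _ true), ← replicate_add, Nat.add_sub_cancel' (by omega)]
      rfl
  obtain ⟨⟨d, hd⟩, hb₁⟩ := count_of_mem_asdiLang_bStar h₁
  obtain ⟨-, hb₂⟩ := count_of_mem_asdiLang_bStar h₂
  simp [foolPrefix_bStar, foolSuffix_bStar, count_replicate] at hd hb₁ hb₂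
  have hi : (i : ℕ) = i' :=
    Nat.eq_of_add_mul_eq_add_mul i.is_lt i'.is_lt (c := 1) (d := d) (by omega)
  exact Prod.ext (Fin.ext hi) (Fin.ext (show (j : ℕ) = j' by omega))

section

variable {m k : ℕ}

/-- `(aᵐ)*` -/
def aLang (m : ℕ) : Language Bool := (cycleNFA (fun _ : ZMod m => false) 0).accepts

/-- `(a bᵏ⁺¹)* a` -/
def abLang (k : ℕ) : Language Bool :=
  (cycleNFA (fun q : ZMod (k + 2) => decide (q ≠ 0)) 1).accepts

/-- `(a bᵏ⁺¹)ˢ` -/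
def abPow (k s : ℕ) : List Bool := (replicate s (false :: replicate (k + 1) true)).flatten

theorem abPow_succ (k s : ℕ) :
    abPow k (s + 1) = false :: replicate (k + 1) true ++ abPow k s := by
  simp [abPow, replicate_succ]

theorem count_abPow (k s : ℕ) :
    (abPow k s).count true = (k + 1) * s ∧ (abPow k s).count false = s := by
  induction s with
  | zero => simp [abPow]
  | succ s ih => simp [abPow_succ, count_replicate, ih]; ring

theorem length_abPow (k s : ℕ) : (abPow k s).length = (k + 2) * s := by
  induction s with
  | zero => rfl
  | succ s ih => simp [abPow_succ, ih]; ring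

theorem mem_aLang {x : List Bool} : x ∈ aLang m ↔ (∀ e ∈ x, e = false) ∧ m ∣ x.length := by
  rw [aLang, mem_cycleNFA_const_accepts, ZMod.natCast_eq_zero_iff]

theorem cycleWord_abPow (k s : ℕ) :
    cycleWord (fun q : ZMod (k + 2) => decide (q ≠ 0)) 0 ((k + 2) * s + 1) =
      abPow k s ++ [false] := by
  induction s with
  | zero => rfl
  | succ s ih =>
    have hblock : cycleWord (fun q : ZMod (k + 2) => decide (q ≠ 0)) 1 (k + 1) =
        replicate (k + 1) true := by
      refine cycleWord_eq_replicate fun i hi => ?_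
      rw [decide_eq_true_iff, ← Nat.cast_one, ← Nat.cast_add, Ne, ZMod.natCast_eq_zero_iff]
      exact Nat.not_dvd_of_pos_of_lt (by omega) (by omega)
    rw [show (k + 2) * (s + 1) + 1 = (k + 1 + 1) + ((k + 2) * s + 1) by ring, cycleWord_add,
      show ((k + 1 + 1 : ℕ) : ZMod (k + 2)) = 0 from ZMod.natCast_self _, zero_add, ih,
      cycleWord, zero_add, hblock, abPow_succ]
    simp

theorem mem_abLang {y : List Bool} : y ∈ abLang k ↔ ∃ s, y = abPow k s ++ [false] := by
  rw [abLang, mem_cycleNFA_accepts]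
  constructor
  · rintro ⟨hy, hlen⟩
    have hmod : y.length % (k + 2) = 1 := by
      rw [← Nat.cast_one, ZMod.natCast_eq_natCast_iff'] at hlen
      rw [hlen, Nat.one_mod_eq_one.2 (by omega)]
    refine ⟨y.length / (k + 2), hy.trans ?_⟩
    rw [← cycleWord_abPow, ← hmod, Nat.div_add_mod]
  · rintro ⟨s, rfl⟩
    have hlen : (abPow k s ++ [false]).length = (k + 2) * s + 1 := by simp [length_abPow]
    rw [hlen, cycleWord_abPow]
    simp

theorem not_infix_of_mem_abLang {y : List Bool} (hy : y ∈ abLang k) :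
    ¬ [false, false] <:+: y := by
  rintro ⟨u, v, rfl⟩
  rw [abLang] at hy
  obtain ⟨_, -, hq⟩ := NFA.mem_accepts.1 hy
  rw [NFA.evalFrom_append] at hq
  obtain ⟨t, ht, -⟩ := NFA.mem_evalFrom_iff_exists.1 hq
  rw [NFA.evalFrom_append] at ht
  obtain ⟨r, -, hr⟩ := NFA.mem_evalFrom_iff_exists.1 ht
  rw [cycleNFA_evalFrom, if_neg] at hr
  · exact hr
  -- `a` can only be read in state `0`, which leads to state `1 ≠ 0`
  have : Fact (1 < k + 2) := ⟨by omega⟩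
  simp +contextual [cycleWord]

theorem mem_asdiLang_abLang_iff {W : List Bool} :
    W ∈ asdiLang (aLang m) (abLang k) ↔ ∃ p q s, m ∣ p + q + 2 ∧
      W = replicate p false ++ (abPow k (s + 1) ++ [false]) ++ replicate q false := by
  constructor
  · rintro ⟨x, hx, y, hy, x₁, x₂, z, c, d, rfl, rfl, rfl⟩
    obtain ⟨hxa, hxm⟩ := mem_aLang.1 hx
    obtain ⟨s, hs⟩ := mem_abLang.1 hy
    have hx₁ : x₁ = replicate x₁.length false :=
      eq_replicate_length.2 fun e he => hxa e (by simp [he])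
    have hx₂ : x₂ = replicate x₂.length false :=
      eq_replicate_length.2 fun e he => hxa e (by simp [he])
    obtain ⟨s, rfl⟩ : ∃ s', s = s' + 1 := by
      refine Nat.exists_eq_succ_of_ne_zero fun hs0 => ?_
      simpa [hs0, abPow] using congrArg length hs
    refine ⟨x₁.length, x₂.length, s, by convert hxm using 1; simp; omega, ?_⟩
    rw [← hs, ← hx₁, ← hx₂]
    simp
  · rintro ⟨p, q, s, hdvd, rfl⟩
    refine ⟨replicate p false ++ [false] ++ [false] ++ replicate q false, ?_,
      abPow k (s + 1) ++ [false], mem_abLang.2 ⟨_, rfl⟩, replicate p false, replicate q false,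
      replicate (k + 1) true ++ abPow k s, false, false, rfl, by simp [abPow_succ],
      by simp [abPow_succ]⟩
    exact mem_aLang.2 ⟨by simp, by convert hdvd using 1; simp; omega⟩

theorem mem_asdiLang_abLang_of {W : List Bool} {p q : ℕ} (s : ℕ) (hp : 0 < p) (hq : 0 < q)
    (h : m ∣ p + q)
    (hW : W = replicate p false ++ replicate (k + 1) true ++ abPow k s ++ replicate q false) :
    W ∈ asdiLang (aLang m) (abLang k) := by
  obtain ⟨p, rfl⟩ := Nat.exists_eq_add_one.2 hp
  obtain ⟨q, rfl⟩ := Nat.exists_eq_add_one.2 hq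
  refine mem_asdiLang_abLang_iff.2 ⟨p, q, s, by convert h using 1; omega, ?_⟩
  rw [hW, replicate_succ' (n := p), replicate_succ (n := q)]
  simp [abPow_succ]

theorem count_of_mem_asdiLang_abLang {W : List Bool} (h : W ∈ asdiLang (aLang m) (abLang k)) :
    ∃ t d, 0 < t ∧ W.count true = (k + 1) * t ∧ W.count false + 1 = t + m * d := by
  obtain ⟨p, q, s, ⟨d, hd⟩, rfl⟩ := mem_asdiLang_abLang_iff.1 h
  refine ⟨s + 1, d, s.succ_pos, by simp [count_replicate, count_abPow], ?_⟩
  simp [count_abPow]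
  omega

theorem exists_count_false_of_mem_asdiLang_abLang {W : List Bool} {t : ℕ}
    (h : W ∈ asdiLang (aLang m) (abLang k)) (ht : W.count true = (k + 1) * t) :
    ∃ d, W.count false + 1 = t + m * d := by
  obtain ⟨t', d, -, ht', hd⟩ := count_of_mem_asdiLang_abLang h
  obtain rfl := Nat.eq_of_mul_eq_mul_left k.succ_pos (ht'.symm.trans ht)
  exact ⟨d, hd⟩

theorem notMem_asdiLang_abLang_of_inner_block {u v : List Bool} {r : ℕ} (hr : 2 ≤ r)
    (hu : true ∈ u) (hv : true ∈ v) :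
    u ++ replicate r false ++ v ∉ asdiLang (aLang m) (abLang k) := by
  intro h
  obtain ⟨p, q, s, -, hW⟩ := mem_asdiLang_abLang_iff.1 h
  obtain ⟨r, rfl⟩ : ∃ r', r = r' + 2 := ⟨r - 2, by omega⟩
  have hsplit : u ++ replicate (r + 2) false ++ v =
      u ++ replicate r false ++ [false, false] ++ v := by
    simp [replicate_add]
  rcases isPrefix_or_isSuffix_of_eq_append_pair_append
      (not_infix_of_mem_abLang (mem_abLang.2 ⟨_, rfl⟩)) (hW.symm.trans hsplit) with hpre | hsuf
  · simpa using hpre.subset (mem_append_left _ hu)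
  · simpa using hsuf.subset hv

/-- The four families of the fooling set stop before the insertion site, inside the inserted word
after `j` letters of a block `bᵏ⁺¹`, inside it at the end of a block, and after it; `i` fixes the
number of `a`s read modulo `m`. -/
inductive Probe (m k : ℕ)
  | before (i : Fin m)
  | inside (i : Fin m) (j : Fin (k + 1))
  | boundary (i : Fin m)
  | after (i : Fin m)

def Probe.equivSum : Probe m k ≃ Fin m ⊕ (Fin m × Fin (k + 1)) ⊕ Fin m ⊕ Fin m where
  toFun
    | .before i => .inl i
    | .inside i j => .inr (.inl (i, j))
    | .boundary i => .inr (.inr (.inl i))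
    | .after i => .inr (.inr (.inr i))
  invFun
    | .inl i => .before i
    | .inr (.inl (i, j)) => .inside i j
    | .inr (.inr (.inl i)) => .boundary i
    | .inr (.inr (.inr i)) => .after i
  left_inv p := by cases p <;> rfl
  right_inv p := by rcases p with i | ⟨i, j⟩ | i | i <;> rfl

instance : Fintype (Probe m k) := Fintype.ofEquiv _ Probe.equivSum.symm

theorem Probe.card : Fintype.card (Probe m k) = m * (k + 2) + 2 * m := by
  rw [Fintype.card_congr Probe.equivSum]
  simp only [Fintype.card_sum, Fintype.card_prod, Fintype.card_fin]
  ring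

def Probe.foolPrefix : Probe m k → List Bool
  | .before i => replicate (i + 1) false
  | .inside i j => replicate (i + 1) false ++ replicate (k + 1) true ++ [false] ++ replicate j true
  | .boundary i =>
    replicate (i + 1) false ++ replicate (k + 1) true ++ [false] ++ replicate (k + 1) true
  | .after i => replicate m false ++ replicate (k + 1) true ++ replicate (i + 2) false

-- The `3 * m` keep every `a`-block created by pairing two different families at least two long.
def Probe.foolSuffix : Probe m k → List Bool
  | .before i => replicate (3 * m - i - 1) false ++ replicate (k + 1) true ++ replicate m false
  | .inside i j => replicate (k + 1 - j) true ++ replicate (2 * m - i - 1) false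
  | .boundary i => [false] ++ replicate (k + 1) true ++ replicate (3 * m - i - 1) false
  | .after i => replicate (3 * m - i - 2) false

namespace Probe

theorem foolPrefix_append_foolSuffix_mem (p : Probe m k) :
    p.foolPrefix ++ p.foolSuffix ∈ asdiLang (aLang m) (abLang k) := by
  rcases p with i | ⟨i, j⟩ | i | i <;> have hi := i.is_lt
  · refine mem_asdiLang_abLang_of 0 (p := 3 * m) (q := m) (by omega) (by omega) ⟨4, by ring⟩ ?_
    simp [foolPrefix, foolSuffix, abPow, replicate_append_replicate_append,
      show i + 1 + (3 * m - i - 1) = 3 * m by omega]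
  · refine mem_asdiLang_abLang_of 1 (p := i + 1) (q := 2 * m - i - 1) (by omega) (by omega)
      ⟨2, by omega⟩ ?_
    simp [foolPrefix, foolSuffix, abPow, replicate_append_replicate_append,
      show j + (k + 1 - j) = k + 1 by omega]
  · refine mem_asdiLang_abLang_of 2 (p := i + 1) (q := 3 * m - i - 1) (by omega) (by omega)
      ⟨3, by omega⟩ ?_
    simp [foolPrefix, foolSuffix, abPow]
  · refine mem_asdiLang_abLang_of 0 (p := m) (q := 3 * m) (by omega) (by omega) ⟨4, by ring⟩ ?_
    simp [foolPrefix, foolSuffix, abPow, show i + 2 + (3 * m - i - 2) = 3 * m by omega]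

variable {i i' : Fin m}

theorem eq_of_mem_before (h : (before i : Probe m k).foolPrefix ++
    (before i' : Probe m k).foolSuffix ∈ asdiLang (aLang m) (abLang k)) : i = i' := by
  obtain ⟨d, hd⟩ := exists_count_false_of_mem_asdiLang_abLang h (t := 1)
    (by simp [foolPrefix, foolSuffix, count_replicate])
  simp [foolPrefix, foolSuffix, count_replicate] at hd
  exact Fin.ext (Nat.eq_of_add_mul_eq_add_mul i.is_lt i'.is_lt (c := 4) (d := d) (by omega))

theorem eq_of_mem_inside {j j' : Fin (k + 1)} (h : (inside i j : Probe m k).foolPrefix ++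
    (inside i' j').foolSuffix ∈ asdiLang (aLang m) (abLang k)) : i = i' ∧ j = j' := by
  obtain ⟨t, -, -, ht, -⟩ := count_of_mem_asdiLang_abLang h
  simp [foolPrefix, foolSuffix, count_replicate] at ht
  have hj : j = j' :=
    Fin.ext (Nat.eq_of_add_mul_eq_add_mul j.is_lt j'.is_lt (c := 2) (d := t) (by omega))
  obtain ⟨d, hd⟩ := exists_count_false_of_mem_asdiLang_abLang h (t := 2)
    (by simp [foolPrefix, foolSuffix, count_replicate]; omega)
  simp [foolPrefix, foolSuffix, count_replicate] at hd
  exact ⟨Fin.ext (Nat.eq_of_add_mul_eq_add_mul i.is_lt i'.is_lt (c := 2) (d := d) (by omega)), hj⟩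

theorem eq_of_mem_boundary (h : (boundary i : Probe m k).foolPrefix ++
    (boundary i' : Probe m k).foolSuffix ∈ asdiLang (aLang m) (abLang k)) : i = i' := by
  obtain ⟨d, hd⟩ := exists_count_false_of_mem_asdiLang_abLang h (t := 3)
    (by simp [foolPrefix, foolSuffix, count_replicate]; ring)
  simp [foolPrefix, foolSuffix, count_replicate] at hd
  exact Fin.ext (Nat.eq_of_add_mul_eq_add_mul i.is_lt i'.is_lt (c := 3) (d := d) (by omega))

theorem eq_of_mem_after (h : (after i : Probe m k).foolPrefix ++
    (after i' : Probe m k).foolSuffix ∈ asdiLang (aLang m) (abLang k)) : i = i' := by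
  obtain ⟨d, hd⟩ := exists_count_false_of_mem_asdiLang_abLang h (t := 1)
    (by simp [foolPrefix, foolSuffix, count_replicate])
  simp [foolPrefix, foolSuffix, count_replicate] at hd
  exact Fin.ext (Nat.eq_of_add_mul_eq_add_mul i.is_lt i'.is_lt (c := 4) (d := d) (by omega))

theorem notMem_inside_before {j : Fin (k + 1)} : (inside i j : Probe m k).foolPrefix ++
    (before i' : Probe m k).foolSuffix ∉ asdiLang (aLang m) (abLang k) := by
  have := i'.is_lt
  simpa only [foolPrefix, foolSuffix, append_assoc] using
    notMem_asdiLang_abLang_of_inner_block (m := m) (k := k)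
      (u := replicate (i + 1) false ++ replicate (k + 1) true ++ [false] ++ replicate j true)
      (r := 3 * m - i' - 1) (v := replicate (k + 1) true ++ replicate m false)
      (by omega) (by simp) (by simp)

theorem notMem_boundary_before : (boundary i : Probe m k).foolPrefix ++
    (before i' : Probe m k).foolSuffix ∉ asdiLang (aLang m) (abLang k) := by
  have := i'.is_lt
  simpa only [foolPrefix, foolSuffix, append_assoc] using
    notMem_asdiLang_abLang_of_inner_block (m := m) (k := k)
      (u := replicate (i + 1) false ++ replicate (k + 1) true ++ [false] ++
        replicate (k + 1) true)
      (r := 3 * m - i' - 1) (v := replicate (k + 1) true ++ replicate m false)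
      (by omega) (by simp) (by simp)

theorem notMem_after_inside {j' : Fin (k + 1)} : (after i : Probe m k).foolPrefix ++
    (inside i' j').foolSuffix ∉ asdiLang (aLang m) (abLang k) := by
  have := j'.is_lt
  simpa only [foolPrefix, foolSuffix, append_assoc] using
    notMem_asdiLang_abLang_of_inner_block (m := m) (k := k)
      (u := replicate m false ++ replicate (k + 1) true) (r := i + 2)
      (v := replicate (k + 1 - j') true ++ replicate (2 * m - i' - 1) false)
      (by omega) (by simp) (by simp; omega)

theorem notMem_after_boundary : (after i : Probe m k).foolPrefix ++
    (boundary i' : Probe m k).foolSuffix ∉ asdiLang (aLang m) (abLang k) := by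
  simpa only [foolPrefix, foolSuffix, append_assoc] using
    notMem_asdiLang_abLang_of_inner_block (m := m) (k := k)
      (u := replicate m false ++ replicate (k + 1) true) (r := i + 2)
      (v := [false] ++ replicate (k + 1) true ++ replicate (3 * m - i' - 1) false)
      (by omega) (by simp) (by simp)

theorem notMem_before_after : (before i : Probe m k).foolPrefix ++
    (after i' : Probe m k).foolSuffix ∉ asdiLang (aLang m) (abLang k) := by
  intro h
  obtain ⟨t, -, ht, hb, -⟩ := count_of_mem_asdiLang_abLang h
  simp [foolPrefix, foolSuffix, count_replicate] at hb
  omega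

theorem notMem_inside_boundary {j : Fin (k + 1)} : (inside i j : Probe m k).foolPrefix ++
    (boundary i' : Probe m k).foolSuffix ∉ asdiLang (aLang m) (abLang k) := by
  intro h
  obtain ⟨t, -, -, ht, -⟩ := count_of_mem_asdiLang_abLang h
  simp [foolPrefix, foolSuffix, count_replicate] at ht
  have hj : (j : ℕ) = 0 :=
    Nat.eq_of_add_mul_eq_add_mul j.is_lt k.succ_pos (c := 2) (d := t) (by omega)
  refine notMem_asdiLang_abLang_of_inner_block (m := m) (k := k)
    (u := replicate (i + 1) false ++ replicate (k + 1) true) (r := 2)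
    (v := replicate (k + 1) true ++ replicate (3 * m - i' - 1) false)
    le_rfl (by simp) (by simp) ?_
  simpa [foolPrefix, foolSuffix, hj] using h

end Probe

theorem isExtendedFoolingSet_abLang (m k : ℕ) :
    Language.IsExtendedFoolingSet (asdiLang (aLang m) (abLang k))
      (Probe.foolPrefix (m := m) (k := k)) Probe.foolSuffix := by
  refine ⟨Probe.foolPrefix_append_foolSuffix_mem, ?_⟩
  rintro (i | ⟨i, j⟩ | i | i) (i' | ⟨i', j'⟩ | i' | i') h₁ h₂
  · rw [Probe.eq_of_mem_before h₁]
  · exact (Probe.notMem_inside_before h₂).elim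
  · exact (Probe.notMem_boundary_before h₂).elim
  · exact (Probe.notMem_before_after h₁).elim
  · exact (Probe.notMem_inside_before h₁).elim
  · obtain ⟨rfl, rfl⟩ := Probe.eq_of_mem_inside h₁
    rfl
  · exact (Probe.notMem_inside_boundary h₁).elim
  · exact (Probe.notMem_after_inside h₂).elim
  · exact (Probe.notMem_boundary_before h₁).elim
  · exact (Probe.notMem_inside_boundary h₂).elim
  · rw [Probe.eq_of_mem_boundary h₁]
  · exact (Probe.notMem_after_boundary h₂).elim
  · exact (Probe.notMem_before_after h₂).elim
  · exact (Probe.notMem_after_inside h₁).elim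
  · exact (Probe.notMem_after_boundary h₁).elim
  · rw [Probe.eq_of_mem_after h₁]

end

end AsdiLowerBound

/-- Lower bound `mn + 2m` for the nondeterministic state complexity of
alphabetic site-directed insertion, witnessed over a binary alphabet. -/
theorem asdi_nfa_lower_bound (m n : ℕ) (hm : 1 ≤ m) (hn : 1 ≤ n) :
    ∃ L₁ L₂ : Language Bool,
      (∃ (σ : Type) (inst : Fintype σ) (M : NFA Bool σ),
          @Fintype.card σ inst = m ∧ M.accepts = L₁) ∧
      (∃ (σ : Type) (inst : Fintype σ) (N : NFA Bool σ),
          @Fintype.card σ inst = n ∧ N.accepts = L₂) ∧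
      (∀ (σ : Type) (inst : Fintype σ) (C : NFA Bool σ),
          C.accepts = asdiLang L₁ L₂ → m * n + 2 * m ≤ @Fintype.card σ inst) := by
  have : NeZero m := ⟨by omega⟩
  obtain rfl | ⟨k, rfl⟩ : n = 1 ∨ ∃ k, n = k + 2 := by
    rcases n with _ | _ | k
    exacts [absurd hn (by omega), .inl rfl, .inr ⟨k, rfl⟩]
  · refine ⟨(countNFA m false).accepts, AsdiLowerBound.bStar, ⟨ZMod m, _, _, ZMod.card m, rfl⟩,
      ⟨ZMod 1, _, _, ZMod.card 1, rfl⟩, fun σ _ C hC => ?_⟩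
    calc m * 1 + 2 * m = Fintype.card (Fin m × Fin 3) := by simp; ring
      _ ≤ Fintype.card σ :=
        C.card_le_of_isExtendedFoolingSet (hC ▸ AsdiLowerBound.isExtendedFoolingSet_bStar m)
  · refine ⟨AsdiLowerBound.aLang m, AsdiLowerBound.abLang k, ⟨ZMod m, _, _, ZMod.card m, rfl⟩,
      ⟨ZMod (k + 2), _, _, ZMod.card (k + 2), rfl⟩, fun σ _ C hC => ?_⟩
    rw [← AsdiLowerBound.Probe.card]
    exact C.card_le_of_isExtendedFoolingSet (hC ▸ AsdiLowerBound.isExtendedFoolingSet_abLang m k)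
end
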